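/- arXiv:math/0412016 — 6 statements merged into one kernel-verified Lean document; each statement's English description precedes it below -/
import Mathlib

section
/- Let H be a Hopf algebra over a field k with product m and coproduct Δ. For linear endomorphisms f, g of H define the smash product f#g = m ∘ (1⊗g) ∘ (1⊗m) ∘ cyclic ∘ (Δ⊗1) ∘ (f⊗1) ∘ Δ, where cyclic(x⊗y⊗z) = y⊗z⊗x. Then the smash product # is an associative operation on End(H). -/
open TensorProduct

/-- The cyclic map `(x ⊗ y) ⊗ z ↦ y ⊗ (z ⊗ x)`. -/
noncomputable def cyclicMap (k H : Type*) [CommSemiring k] [AddCommMonoid H] [Module k H] :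
    (H ⊗[k] H) ⊗[k] H →ₗ[k] H ⊗[k] (H ⊗[k] H) :=
  (LinearMap.lTensor H (TensorProduct.comm k H H).toLinearMap) ∘ₗ
    (TensorProduct.assoc k H H H).toLinearMap ∘ₗ
      (LinearMap.rTensor H (TensorProduct.comm k H H).toLinearMap)

/-- The smash product of linear endomorphisms, relative to a given product `m` and
coproduct `Δ`:  `f # g = m ∘ (1⊗g) ∘ (1⊗m) ∘ cyclic ∘ (Δ⊗1) ∘ (f⊗1) ∘ Δ`. -/
noncomputable def smashOf {k H : Type*} [CommSemiring k] [AddCommMonoid H] [Module k H]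
    (m : H ⊗[k] H →ₗ[k] H) (Δ : H →ₗ[k] H ⊗[k] H) (f g : H →ₗ[k] H) : H →ₗ[k] H :=
  m ∘ₗ (LinearMap.lTensor H g) ∘ₗ (LinearMap.lTensor H m) ∘ₗ cyclicMap k H ∘ₗ
    (LinearMap.rTensor H (Δ ∘ₗ f)) ∘ₗ Δ

/-- The smash product of endomorphisms of a Hopf algebra. -/
noncomputable def smashEnd (k H : Type*) [CommSemiring k] [Semiring H] [HopfAlgebra k H]
    (f g : H →ₗ[k] H) : H →ₗ[k] H :=
  smashOf (LinearMap.mul' k H) (Coalgebra.comul (R := k) (A := H)) f g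

section SmashAux

open Coalgebra

variable {k H : Type*} [CommSemiring k] [Semiring H] [Bialgebra k H]

/-- `Qmap h (y ⊗ c) = Σ y₂ * h (c * y₁)`. -/
noncomputable def Qmap (h : H →ₗ[k] H) : H ⊗[k] H →ₗ[k] H :=
  LinearMap.mul' k H ∘ₗ LinearMap.lTensor H h ∘ₗ LinearMap.lTensor H (LinearMap.mul' k H) ∘ₗ
    cyclicMap k H ∘ₗ LinearMap.rTensor H (Coalgebra.comul (R := k) (A := H))

lemma smashOf_eq (f g : H →ₗ[k] H) :
    smashOf (LinearMap.mul' k H) (Coalgebra.comul (R := k) (A := H)) f g =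
      Qmap g ∘ₗ LinearMap.rTensor H f ∘ₗ (Coalgebra.comul (R := k) (A := H)) := by
  simp only [smashOf, Qmap, LinearMap.rTensor_comp, LinearMap.comp_assoc]

lemma Qmap_apply (h : H →ₗ[k] H) (y c : H) (ry : Coalgebra.Repr k y (H × H)) :
    Qmap h (y ⊗ₜ[k] c) = ∑ i ∈ ry.index, ry.right i * h (c * ry.left i) := by
  simp only [Qmap, cyclicMap, LinearMap.comp_apply, LinearMap.rTensor_tmul, ← ry.eq]
  simp [TensorProduct.sum_tmul, TensorProduct.tmul_sum, LinearMap.mul'_apply]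

lemma smashOf_apply (f g : H →ₗ[k] H) (x : H) (r : Coalgebra.Repr k x (H × H)) :
    smashOf (LinearMap.mul' k H) (Coalgebra.comul (R := k) (A := H)) f g x =
      ∑ i ∈ r.index, Qmap g (f (r.left i) ⊗ₜ[k] r.right i) := by
  rw [smashOf_eq]
  simp only [LinearMap.comp_apply, ← r.eq, map_sum, LinearMap.rTensor_tmul]

/-- `Q` is "multiplicative": `Q((u*v) ⊗ c) = Σ u₂ * Q(v ⊗ (c*u₁))`. -/
lemma Qmap_mul (h : H →ₗ[k] H) (u v c : H) (ru : Coalgebra.Repr k u (H × H)) :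
    Qmap h ((u * v) ⊗ₜ[k] c) =
      ∑ i ∈ ru.index, ru.right i * Qmap h (v ⊗ₜ[k] (c * ru.left i)) := by
  classical
  set rv := Coalgebra.Repr.arbitrary k v with hrv
  have hcm : Coalgebra.comul (R := k) (u * v) =
      ∑ i ∈ ru.index, ∑ j ∈ rv.index,
        (ru.left i * rv.left j) ⊗ₜ[k] (ru.right i * rv.right j) := by
    rw [Bialgebra.comul_mul, ← ru.eq, ← rv.eq, Finset.sum_mul_sum]
    simp [Algebra.TensorProduct.tmul_mul_tmul]
  have hR : ∀ c', Qmap h (v ⊗ₜ[k] c') = ∑ j ∈ rv.index, rv.right j * h (c' * rv.left j) :=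
    fun c' => Qmap_apply h v c' rv
  simp only [hR]
  simp only [Qmap, cyclicMap, LinearMap.comp_apply, LinearMap.rTensor_tmul, hcm]
  simp [TensorProduct.sum_tmul, TensorProduct.tmul_sum, LinearMap.mul'_apply,
    Finset.mul_sum, mul_assoc]

/-- Smash applied to a product, expanded with given representations. -/
lemma smashOf_mul_apply (g' h' : H →ₗ[k] H) (u v : H)
    (ru : Coalgebra.Repr k u (H × H)) (rv : Coalgebra.Repr k v (H × H)) :
    smashOf (LinearMap.mul' k H) (Coalgebra.comul (R := k) (A := H)) g' h' (u * v) =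
      ∑ t ∈ ru.index, ∑ w ∈ rv.index,
        Qmap h' (g' (ru.left t * rv.left w) ⊗ₜ[k] (ru.right t * rv.right w)) := by
  have hcm : Coalgebra.comul (R := k) (u * v) =
      ∑ t ∈ ru.index, ∑ w ∈ rv.index,
        (ru.left t * rv.left w) ⊗ₜ[k] (ru.right t * rv.right w) := by
    rw [Bialgebra.comul_mul, ← ru.eq, ← rv.eq, Finset.sum_mul_sum]
    simp [Algebra.TensorProduct.tmul_mul_tmul]
  rw [smashOf_eq]
  simp only [LinearMap.comp_apply, hcm, map_sum, LinearMap.rTensor_tmul]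

/-- `Xi g h b' b'' (P₁ ⊗ P₂ ⊗ P₃) = P₃ * Q(g(b'*P₁) ⊗ (b''*P₂))`. -/
noncomputable def Xi (g h : H →ₗ[k] H) (b' b'' : H) : H ⊗[k] (H ⊗[k] H) →ₗ[k] H :=
  LinearMap.mul' k H ∘ₗ LinearMap.lTensor H (Qmap h) ∘ₗ
    (TensorProduct.comm k (H ⊗[k] H) H).toLinearMap ∘ₗ
    (TensorProduct.assoc k H H H).symm.toLinearMap ∘ₗ
    TensorProduct.map (g ∘ₗ LinearMap.mulLeft k b')
      (TensorProduct.map (LinearMap.mulLeft k b'') LinearMap.id)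

lemma Xi_eval (g h : H →ₗ[k] H) (b' b'' P₁ P₂ P₃ : H) :
    Xi g h b' b'' (P₁ ⊗ₜ[k] (P₂ ⊗ₜ[k] P₃)) =
      P₃ * Qmap h (g (b' * P₁) ⊗ₜ[k] (b'' * P₂)) := by
  simp [Xi, LinearMap.mul'_apply]

/-- The master linear map:
`Lam f g h (A ⊗ A'' ⊗ B) = Σ F₃ * Q(g(A''*F₁) ⊗ (B*F₂))` where `Δ²(f A) = Σ F₁⊗F₂⊗F₃`. -/
noncomputable def Lam (f g h : H →ₗ[k] H) : H ⊗[k] (H ⊗[k] H) →ₗ[k] H :=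
  LinearMap.mul' k H ∘ₗ LinearMap.lTensor H (Qmap h) ∘ₗ
    (TensorProduct.comm k (H ⊗[k] H) H).toLinearMap ∘ₗ
    (TensorProduct.assoc k H H H).symm.toLinearMap ∘ₗ
    TensorProduct.map
      (g ∘ₗ LinearMap.mul' k H ∘ₗ (TensorProduct.comm k H H).toLinearMap)
      (LinearMap.rTensor H (LinearMap.mul' k H) ∘ₗ
        (TensorProduct.assoc k H H H).symm.toLinearMap ∘ₗ
        (TensorProduct.comm k (H ⊗[k] H) H).toLinearMap) ∘ₗ
    (TensorProduct.tensorTensorTensorComm k H (H ⊗[k] H) H H).toLinearMap ∘ₗ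
    LinearMap.rTensor (H ⊗[k] H)
      (LinearMap.lTensor H (Coalgebra.comul (R := k) (A := H)) ∘ₗ
        (Coalgebra.comul (R := k) (A := H)) ∘ₗ f)

lemma Lam_eval (f g h : H →ₗ[k] H) (A A'' B : H) (r1 : Coalgebra.Repr k (f A) (H × H))
    (r2 : ∀ q : H × H, Coalgebra.Repr k (r1.right q) (H × H)) :
    Lam f g h (A ⊗ₜ[k] (A'' ⊗ₜ[k] B)) =
      ∑ q ∈ r1.index, ∑ s ∈ (r2 q).index,
        (r2 q).right s * Qmap h (g (A'' * r1.left q) ⊗ₜ[k] (B * (r2 q).left s)) := by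
  have hD : (LinearMap.lTensor H (Coalgebra.comul (R := k) (A := H)) ∘ₗ
      (Coalgebra.comul (R := k) (A := H)) ∘ₗ f) A =
      ∑ q ∈ r1.index, ∑ s ∈ (r2 q).index,
        r1.left q ⊗ₜ[k] ((r2 q).left s ⊗ₜ[k] (r2 q).right s) := by
    simp only [LinearMap.comp_apply, ← r1.eq, map_sum, LinearMap.lTensor_tmul]
    refine Finset.sum_congr rfl fun q _ => ?_
    rw [← (r2 q).eq, TensorProduct.tmul_sum]
  simp only [Lam, LinearMap.comp_apply, LinearMap.rTensor_tmul, hD]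
  simp [TensorProduct.sum_tmul, TensorProduct.tmul_sum, LinearMap.mul'_apply]

end SmashAux

section SmashEndAux

open Coalgebra

variable {k H : Type*} [CommSemiring k] [Semiring H] [HopfAlgebra k H]

lemma smashEnd_apply (f g : H →ₗ[k] H) (x : H) (r : Coalgebra.Repr k x (H × H)) :
    smashEnd k H f g x = ∑ i ∈ r.index, Qmap g (f (r.left i) ⊗ₜ[k] r.right i) :=
  smashOf_apply f g x r

lemma smashEnd_mul_apply (g' h' : H →ₗ[k] H) (u v : H)
    (ru : Coalgebra.Repr k u (H × H)) (rv : Coalgebra.Repr k v (H × H)) :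
    smashEnd k H g' h' (u * v) =
      ∑ t ∈ ru.index, ∑ w ∈ rv.index,
        Qmap h' (g' (ru.left t * rv.left w) ⊗ₜ[k] (ru.right t * rv.right w)) :=
  smashOf_mul_apply g' h' u v ru rv

end SmashEndAux

/-- for a Hopf algebra `H` over a field `k`, the smash product
`f # g = m ∘ (1⊗g) ∘ (1⊗m) ∘ cyclic ∘ (Δ⊗1) ∘ (f⊗1) ∘ Δ` is an associative operation
on `End(H)`. -/
theorem smashEnd_assoc (k H : Type*) [Field k] [Semiring H] [HopfAlgebra k H]
    (f g h : H →ₗ[k] H) :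
    smashEnd k H (smashEnd k H f g) h = smashEnd k H f (smashEnd k H g h) := by
  classical
  ext x
  -- representations
  set r := Coalgebra.Repr.arbitrary k x with hr
  set rr : ∀ i : H × H, Coalgebra.Repr k (r.left i) (H × H) :=
    fun i => Coalgebra.Repr.arbitrary k (r.left i) with hrr
  set rb : ∀ i : H × H, Coalgebra.Repr k (r.right i) (H × H) :=
    fun i => Coalgebra.Repr.arbitrary k (r.right i) with hrb
  set rf : ∀ i : H × H, Coalgebra.Repr k (f (r.left i)) (H × H) :=
    fun i => Coalgebra.Repr.arbitrary k (f (r.left i)) with hrf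
  set rF1 : ∀ (i : H × H) (j : (rf i).ι), Coalgebra.Repr k ((rf i).left j) (H × H) :=
    fun i j => Coalgebra.Repr.arbitrary k ((rf i).left j) with hrF1
  set rF2 : ∀ (i : H × H) (j : (rf i).ι), Coalgebra.Repr k ((rf i).right j) (H × H) :=
    fun i j => Coalgebra.Repr.arbitrary k ((rf i).right j) with hrF2
  set rfa : ∀ (i : H × H) (p : (rr i).ι), Coalgebra.Repr k (f ((rr i).left p)) (H × H) :=
    fun i p => Coalgebra.Repr.arbitrary k (f ((rr i).left p)) with hrfa
  set rF2a : ∀ (i : H × H) (p : (rr i).ι) (q : (rfa i p).ι),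
      Coalgebra.Repr k ((rfa i p).right q) (H × H) :=
    fun i p q => Coalgebra.Repr.arbitrary k ((rfa i p).right q) with hrF2a
  -- Left hand side
  have hLHS : smashEnd k H (smashEnd k H f g) h x =
      ∑ i ∈ r.index, ∑ p ∈ (rr i).index,
        Lam f g h ((rr i).left p ⊗ₜ[k] ((rr i).right p ⊗ₜ[k] r.right i)) := by
    rw [smashEnd_apply _ _ _ r]
    refine Finset.sum_congr rfl fun i _ => ?_
    have hfg : smashEnd k H f g (r.left i) =
        ∑ p ∈ (rr i).index, ∑ q ∈ (rfa i p).index,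
          (rfa i p).right q * g ((rr i).right p * (rfa i p).left q) := by
      rw [smashEnd_apply _ _ _ (rr i)]
      exact Finset.sum_congr rfl fun p _ => Qmap_apply g _ _ (rfa i p)
    rw [hfg]
    simp only [TensorProduct.sum_tmul, map_sum]
    refine Finset.sum_congr rfl fun p _ => ?_
    rw [Lam_eval f g h _ _ _ (rfa i p) (rF2a i p)]
    exact Finset.sum_congr rfl fun q _ => Qmap_mul h _ _ _ (rF2a i p q)
  -- coassociativity on x
  have hco := Coalgebra.sum_tmul_tmul_eq (R := k) r rr rb
  have hco' := congrArg (Lam f g h) hco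
  simp only [map_sum] at hco'
  rw [hLHS, hco']
  -- Right hand side
  rw [smashEnd_apply _ _ _ r]
  refine Finset.sum_congr rfl fun i _ => ?_
  -- Claim C : expand `Lam` and use coassociativity of `f (r.left i)`
  have hC : ∀ (b' b'' : H),
      Lam f g h (r.left i ⊗ₜ[k] (b' ⊗ₜ[k] b'')) =
        ∑ j ∈ (rf i).index, ∑ w ∈ (rF1 i j).index,
          (rf i).right j *
            Qmap h (g (b' * (rF1 i j).left w) ⊗ₜ[k] (b'' * (rF1 i j).right w)) := by
    intro b' b''
    rw [Lam_eval f g h _ _ _ (rf i) (rF2 i)]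
    have hcf := Coalgebra.sum_tmul_tmul_eq (R := k) (rf i) (rF1 i) (rF2 i)
    have hcf' := congrArg (Xi g h b' b'') hcf
    simp only [map_sum, Xi_eval] at hcf'
    exact hcf'.symm
  simp only [hC]
  -- expand the right hand side term
  rw [Qmap_apply (smashEnd k H g h) _ _ (rf i), Finset.sum_comm]
  refine Finset.sum_congr rfl fun j _ => ?_
  rw [smashEnd_mul_apply g h _ _ (rb i) (rF1 i j)]
  simp [Finset.mul_sum]
end

section
/- Let H = ⊕_{n≥0} H_n be a graded connected Hopf algebra (H_0 = k). If f ∈ End(H_p) and g ∈ End(H_q) (extended by zero to H), then the smash product f # g lies in ⊕_{n=max(p,q)}^{p+q} End(H_n); that is, the component of f#g in End(H_n) is zero unless max(p,q) ≤ n ≤ p+q. -/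
/-!
Write `Δ x = ∑ x₁ ⊗ x₂` and `Δ (f x₁) = ∑ y₁ ⊗ y₂`, so that `(f # g) x = ∑ y₂ · g (x₂ · y₁)`.
For `x` of degree `n` only terms with `deg x₁ = p` survive, and then `n = p + deg x₂ ≥ p`.
Since `deg y₁ + deg y₂ = p`, a term with `g (x₂ · y₁) ≠ 0` has `deg x₂ + deg y₁ = q`, so it lies
in degree `deg y₂ + q = n`, whence `n ≥ q` and `n = p + q - deg y₁ ≤ p + q`.
-/

open TensorProduct

section GradedSmash

variable {k H : Type*} [CommSemiring k] [AddCommMonoid H] [Module k H] (ℋ : ℕ → Submodule k H)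

def tensorDegree (n : ℕ) : Submodule k (H ⊗[k] H) :=
  ⨆ pq : {pq : ℕ × ℕ // pq.1 + pq.2 = n},
    LinearMap.range (TensorProduct.mapIncl (ℋ pq.1.1) (ℋ pq.1.2))

def truncatedDegree (lo hi n : ℕ) : Submodule k H :=
  if lo ≤ n ∧ n ≤ hi then ℋ n else ⊥

variable {ℋ}

theorem map_mem_of_mem_tensorDegree {M : Type*} [AddCommMonoid M] [Module k M]
    (L : H ⊗[k] H →ₗ[k] M) (S : Submodule k M) {n : ℕ} {t : H ⊗[k] H}
    (ht : t ∈ tensorDegree ℋ n)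
    (h : ∀ a b, a + b = n → ∀ y ∈ ℋ a, ∀ z ∈ ℋ b, L (y ⊗ₜ z) ∈ S) : L t ∈ S := by
  refine (iSup_le fun ⟨⟨a, b⟩, hab⟩ ↦ ?_ : tensorDegree ℋ n ≤ S.comap L) ht
  rw [range_mapIncl, Submodule.map₂_le]
  exact h a b hab

theorem truncatedDegree_le (lo hi n : ℕ) : truncatedDegree ℋ lo hi n ≤ ℋ n := by
  unfold truncatedDegree
  split_ifs
  exacts [le_rfl, bot_le]

theorem eq_zero_of_mem_truncatedDegree {lo hi n : ℕ} (hn : n < lo ∨ hi < n) {x : H}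
    (hx : x ∈ truncatedDegree ℋ lo hi n) : x = 0 := by
  rwa [truncatedDegree, if_neg (by omega), Submodule.mem_bot] at hx

variable {m : H ⊗[k] H →ₗ[k] H} {Δ : H →ₗ[k] H ⊗[k] H} {f g : H →ₗ[k] H} {p q : ℕ}

theorem smash_term_mem_truncatedDegree
    (hm : ∀ a b, ∀ x ∈ ℋ a, ∀ y ∈ ℋ b, m (x ⊗ₜ y) ∈ ℋ (a + b))
    (hgq : ∀ x ∈ ℋ q, g x ∈ ℋ q) (hg0 : ∀ n, n ≠ q → ∀ x ∈ ℋ n, g x = 0)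
    {b c d n : ℕ} (hcd : c + d = p) (hbn : p + b = n) {x₂ y₁ y₂ : H}
    (hx₂ : x₂ ∈ ℋ b) (hy₁ : y₁ ∈ ℋ c) (hy₂ : y₂ ∈ ℋ d) :
    m (y₂ ⊗ₜ g (m (x₂ ⊗ₜ y₁))) ∈ truncatedDegree ℋ (max p q) (p + q) n := by
  have hx₂y₁ := hm b c x₂ hx₂ y₁ hy₁
  by_cases hbc : b + c = q
  · have hmem := hm d q y₂ hy₂ _ (hgq _ (hbc ▸ hx₂y₁))
    rwa [truncatedDegree, if_pos (by omega), ← show d + q = n by omega]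
  · rw [hg0 _ hbc _ hx₂y₁, tmul_zero, map_zero]
    exact Submodule.zero_mem _

theorem smashOf_mem_truncatedDegree
    (hm : ∀ a b, ∀ x ∈ ℋ a, ∀ y ∈ ℋ b, m (x ⊗ₜ y) ∈ ℋ (a + b))
    (hΔ : ∀ n, ∀ x ∈ ℋ n, Δ x ∈ tensorDegree ℋ n)
    (hfp : ∀ x ∈ ℋ p, f x ∈ ℋ p) (hf0 : ∀ n, n ≠ p → ∀ x ∈ ℋ n, f x = 0)
    (hgq : ∀ x ∈ ℋ q, g x ∈ ℋ q) (hg0 : ∀ n, n ≠ q → ∀ x ∈ ℋ n, g x = 0)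
    {n : ℕ} {x : H} (hx : x ∈ ℋ n) :
    smashOf m Δ f g x ∈ truncatedDegree ℋ (max p q) (p + q) n := by
  set T := m ∘ₗ LinearMap.lTensor H g ∘ₗ LinearMap.lTensor H m ∘ₗ cyclicMap k H
  have hT (y₁ y₂ x₂ : H) : T ((y₁ ⊗ₜ y₂) ⊗ₜ x₂) = m (y₂ ⊗ₜ g (m (x₂ ⊗ₜ y₁))) := by
    simp [T, cyclicMap]
  refine map_mem_of_mem_tensorDegree (T ∘ₗ LinearMap.rTensor H (Δ ∘ₗ f)) _ (hΔ n x hx) ?_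
  intro a b hab x₁ hx₁ x₂ hx₂
  by_cases ha : a = p
  · subst ha
    refine map_mem_of_mem_tensorDegree (T ∘ₗ (TensorProduct.mk k _ H).flip x₂) _
      (hΔ a _ (hfp x₁ hx₁)) fun c d hcd y₁ hy₁ y₂ hy₂ ↦ ?_
    simpa [hT] using smash_term_mem_truncatedDegree hm hgq hg0 hcd hab hx₂ hy₁ hy₂
  · simp [hf0 a ha x₁ hx₁]

end GradedSmash

theorem smash_degree_bounds_general (k H : Type*) [Field k] [Semiring H] [HopfAlgebra k H]
    (ℋ : ℕ → Submodule k H) [GradedAlgebra ℋ]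
    (hcomul : ∀ (n : ℕ), ∀ x ∈ ℋ n,
      Coalgebra.comul (R := k) x ∈
        ⨆ pq : {pq : ℕ × ℕ // pq.1 + pq.2 = n},
          LinearMap.range (TensorProduct.mapIncl (ℋ pq.1.1) (ℋ pq.1.2)))
    (p q : ℕ) (f g : H →ₗ[k] H)
    (hfp : ∀ x ∈ ℋ p, f x ∈ ℋ p) (hf0 : ∀ n, n ≠ p → ∀ x ∈ ℋ n, f x = 0)
    (hgq : ∀ x ∈ ℋ q, g x ∈ ℋ q) (hg0 : ∀ n, n ≠ q → ∀ x ∈ ℋ n, g x = 0) :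
    (∀ (n : ℕ), ∀ x ∈ ℋ n, smashEnd k H f g x ∈ ℋ n) ∧
      (∀ (n : ℕ), n < max p q ∨ p + q < n → ∀ x ∈ ℋ n, smashEnd k H f g x = 0) := by
  have hmul : ∀ a b, ∀ x ∈ ℋ a, ∀ y ∈ ℋ b, LinearMap.mul' k H (x ⊗ₜ y) ∈ ℋ (a + b) :=
    fun _ _ _ hx _ hy ↦ by simpa using SetLike.mul_mem_graded hx hy
  have hsmash {n : ℕ} {x : H} (hx : x ∈ ℋ n) :
      smashEnd k H f g x ∈ truncatedDegree ℋ (max p q) (p + q) n :=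
    smashOf_mem_truncatedDegree hmul hcomul hfp hf0 hgq hg0 hx
  exact ⟨fun n x hx ↦ truncatedDegree_le _ _ n (hsmash hx),
    fun n hn x hx ↦ eq_zero_of_mem_truncatedDegree hn (hsmash hx)⟩

/-- Let `H = ⊕ₙ Hₙ` be a graded connected Hopf algebra (graded as an algebra,
with graded coproduct and `H₀ = k·1`).  If `f` is concentrated in degree `p` and `g` in
degree `q` (both extended by zero), then `f # g` is degree-preserving and its component in
`End(Hₙ)` vanishes unless `max(p,q) ≤ n ≤ p+q`. -/
theorem smash_degree_bounds (k H : Type*) [Field k] [Semiring H] [HopfAlgebra k H]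
    (ℋ : ℕ → Submodule k H) [GradedAlgebra ℋ]
    (hconn : ℋ 0 = (1 : Submodule k H))
    (hcomul : ∀ (n : ℕ), ∀ x ∈ ℋ n,
      Coalgebra.comul (R := k) x ∈
        ⨆ pq : {pq : ℕ × ℕ // pq.1 + pq.2 = n},
          LinearMap.range (TensorProduct.mapIncl (ℋ pq.1.1) (ℋ pq.1.2)))
    (p q : ℕ) (f g : H →ₗ[k] H)
    (hfp : ∀ x ∈ ℋ p, f x ∈ ℋ p) (hf0 : ∀ n, n ≠ p → ∀ x ∈ ℋ n, f x = 0)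
    (hgq : ∀ x ∈ ℋ q, g x ∈ ℋ q) (hg0 : ∀ n, n ≠ q → ∀ x ∈ ℋ n, g x = 0) :
    (∀ (n : ℕ), ∀ x ∈ ℋ n, smashEnd k H f g x ∈ ℋ n) ∧
      (∀ (n : ℕ), n < max p q ∨ p + q < n → ∀ x ∈ ℋ n, smashEnd k H f g x = 0) :=
  smash_degree_bounds_general k H ℋ hcomul p q f g hfp hf0 hgq hg0
end

section
/- Let H = ⊕_{n≥0} H_n be a graded connected Hopf algebra, f ∈ End(H_p), g ∈ End(H_q). The component of the smash product f # g in End(H_{p+q}) equals the convolution product f * g = m ∘ (f⊗g) ∘ Δ (restricted to H_{p+q}). -/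
/-!
Write `Δ x = ∑ x₁ ⊗ x₂` with homogeneous tensor factors, so that
`(f # g) x = ∑ (f x₁)₂ · g (x₂ · (f x₁)₁)`. For `x` of degree `p + q` only the terms with
`x₁ ∈ H_p`, `x₂ ∈ H_q` survive, and in `Δ (f x₁) = ∑ y₁ ⊗ y₂` a term survives only if
`x₂ y₁` has degree `q`, i.e. `y₁ ∈ H_0 = k`. For such terms `y₂ · g (x₂ y₁) = ε(y₁) y₂ · g x₂`,
and the counit axiom collapses `∑ ε(y₁) y₂` to `f x₁`, leaving `∑ f x₁ · g x₂`.
-/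

open TensorProduct

@[simp]
theorem cyclicMap_tmul {k H : Type*} [CommSemiring k] [AddCommMonoid H] [Module k H]
    (x y z : H) : cyclicMap k H ((x ⊗ₜ[k] y) ⊗ₜ[k] z) = y ⊗ₜ[k] (z ⊗ₜ[k] x) := by
  simp [cyclicMap]

section TensorSquareGrade

variable {ι k H M : Type*} [Add ι] [CommSemiring k] [AddCommMonoid H] [Module k H]
  [AddCommMonoid M] [Module k M]

/-- The degree `n` part `⨁_{a + b = n} ℋ a ⊗ ℋ b` of `H ⊗ H`. -/
def tensorSquareGrade (ℋ : ι → Submodule k H) (n : ι) : Submodule k (H ⊗[k] H) :=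
  ⨆ pq : {pq : ι × ι // pq.1 + pq.2 = n},
    LinearMap.range (TensorProduct.mapIncl (ℋ pq.1.1) (ℋ pq.1.2))

theorem eqOn_tensorSquareGrade (ℋ : ι → Submodule k H) (n : ι) {Φ Ψ : H ⊗[k] H →ₗ[k] M}
    (h : ∀ a b, a + b = n → ∀ w ∈ ℋ a, ∀ w' ∈ ℋ b, Φ (w ⊗ₜ w') = Ψ (w ⊗ₜ w')) :
    Set.EqOn Φ Ψ (tensorSquareGrade ℋ n) := by
  refine LinearMap.le_eqLocus.mp (iSup_le fun ⟨⟨a, b⟩, hab⟩ => ?_)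
  have hcomp : Φ ∘ₗ mapIncl (ℋ a) (ℋ b) = Ψ ∘ₗ mapIncl (ℋ a) (ℋ b) :=
    TensorProduct.ext' fun w w' => h a b hab w w.2 w' w'.2
  rintro _ ⟨t, rfl⟩
  exact LinearMap.congr_fun hcomp t

end TensorSquareGrade

section Smash

variable {k H : Type*} [CommSemiring k] [Semiring H] [Bialgebra k H]

/-- `y ⊗ v ↦ ∑ y₍₂₎ g (v y₍₁₎)`. -/
noncomputable def smashPairing (g : H →ₗ[k] H) : H ⊗[k] H →ₗ[k] H :=
  LinearMap.mul' k H ∘ₗ LinearMap.lTensor H g ∘ₗ LinearMap.lTensor H (LinearMap.mul' k H) ∘ₗ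
    cyclicMap k H ∘ₗ LinearMap.rTensor H (Coalgebra.comul (R := k))

theorem smashPairing_tmul (g : H →ₗ[k] H) (y v : H) :
    smashPairing g (y ⊗ₜ v) =
      (LinearMap.mul' k H ∘ₗ LinearMap.lTensor H (g ∘ₗ LinearMap.mulLeft k v) ∘ₗ
        (TensorProduct.comm k H H).toLinearMap) (Coalgebra.comul (R := k) y) := by
  simp only [smashPairing, LinearMap.comp_apply, LinearMap.rTensor_tmul]
  induction Coalgebra.comul (R := k) y with
  | zero => simp
  | add s t hs ht => simp only [add_tmul, map_add, hs, ht]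
  | tmul w w' => simp

end Smash

theorem smashEnd_eq_smashPairing_comp {k H : Type*} [CommSemiring k] [Semiring H]
    [HopfAlgebra k H] (f g : H →ₗ[k] H) :
    smashEnd k H f g = smashPairing g ∘ₗ LinearMap.rTensor H f ∘ₗ Coalgebra.comul (R := k) := by
  simp only [smashEnd, smashOf, smashPairing, LinearMap.rTensor_comp, LinearMap.comp_assoc]

section Graded

variable {k H : Type*} [CommSemiring k] [Semiring H] [Bialgebra k H]
  (ℋ : ℕ → Submodule k H) [GradedAlgebra ℋ]

/-- In a connected graded algebra only the terms `w ⊗ w'` of degree `(0, p)` survive. -/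
theorem mul_apply_mul_eq_counit_smul {g : H →ₗ[k] H} {p q a b : ℕ}
    (hconn : ℋ 0 = 1) (hg0 : ∀ n, n ≠ q → ∀ x ∈ ℋ n, g x = 0) (hab : a + b = p)
    {v w w' : H} (hv : v ∈ ℋ q) (hw : w ∈ ℋ a) (hw' : w' ∈ ℋ b) :
    w' * g (v * w) = Coalgebra.counit (R := k) w • (GradedAlgebra.proj ℋ p w' * g v) := by
  rcases Nat.eq_zero_or_pos a with rfl | ha
  · obtain ⟨c, rfl⟩ := Submodule.mem_one.mp (hconn ▸ hw)
    rw [zero_add] at hab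
    subst hab
    rw [GradedAlgebra.proj_apply, DirectSum.decompose_of_mem_same ℋ hw',
      Bialgebra.counit_algebraMap, ← Algebra.commutes, ← Algebra.smul_def, map_smul,
      mul_smul_comm]
  · rw [hg0 (q + a) (by omega) _ (SetLike.mul_mem_graded hv hw), GradedAlgebra.proj_apply,
      DirectSum.decompose_of_mem_ne ℋ hw' (by omega), mul_zero, zero_mul, smul_zero]

theorem smashPairing_tmul_of_mem {g : H →ₗ[k] H} {p q : ℕ} (hconn : ℋ 0 = 1)
    (hcomul : ∀ n, ∀ x ∈ ℋ n, Coalgebra.comul (R := k) x ∈ tensorSquareGrade ℋ n)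
    (hg0 : ∀ n, n ≠ q → ∀ x ∈ ℋ n, g x = 0) {y v : H} (hy : y ∈ ℋ p) (hv : v ∈ ℋ q) :
    smashPairing g (y ⊗ₜ v) = y * g v := by
  let Ψ : H ⊗[k] H →ₗ[k] H := LinearMap.mulRight k (g v) ∘ₗ GradedAlgebra.proj ℋ p ∘ₗ
    (TensorProduct.lid k H).toLinearMap ∘ₗ LinearMap.rTensor H (Coalgebra.counit (R := k))
  have hΨ : Ψ (Coalgebra.comul (R := k) y) = y * g v := by
    simp [Ψ, Coalgebra.rTensor_counit_comul, GradedAlgebra.proj_apply,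
      DirectSum.decompose_of_mem_same ℋ hy]
  rw [smashPairing_tmul, ← hΨ]
  refine eqOn_tensorSquareGrade ℋ p (fun a b hab w hw w' hw' => ?_) (hcomul p y hy)
  simpa [Ψ, smul_mul_assoc] using mul_apply_mul_eq_counit_smul ℋ hconn hg0 hab hv hw hw'

theorem smashPairing_comp_rTensor_eqOn {f g : H →ₗ[k] H} {p q : ℕ} (hconn : ℋ 0 = 1)
    (hcomul : ∀ n, ∀ x ∈ ℋ n, Coalgebra.comul (R := k) x ∈ tensorSquareGrade ℋ n)
    (hfp : ∀ x ∈ ℋ p, f x ∈ ℋ p) (hf0 : ∀ n, n ≠ p → ∀ x ∈ ℋ n, f x = 0)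
    (hg0 : ∀ n, n ≠ q → ∀ x ∈ ℋ n, g x = 0) :
    Set.EqOn (smashPairing g ∘ₗ LinearMap.rTensor H f)
      (LinearMap.mul' k H ∘ₗ TensorProduct.map f g) (tensorSquareGrade ℋ (p + q)) := by
  refine eqOn_tensorSquareGrade ℋ _ fun i j hij u hu v hv => ?_
  by_cases hi : i = p
  · subst hi
    obtain rfl : j = q := by omega
    simpa using smashPairing_tmul_of_mem ℋ hconn hcomul hg0 (hfp u hu) hv
  · simp [hf0 i hi u hu]

end Graded

theorem smash_top_component_eq_convolution_general (k H : Type*) [Field k] [Semiring H]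
    [HopfAlgebra k H] (ℋ : ℕ → Submodule k H) [GradedAlgebra ℋ]
    (hconn : ℋ 0 = (1 : Submodule k H))
    (hcomul : ∀ (n : ℕ), ∀ x ∈ ℋ n,
      Coalgebra.comul (R := k) x ∈
        ⨆ pq : {pq : ℕ × ℕ // pq.1 + pq.2 = n},
          LinearMap.range (TensorProduct.mapIncl (ℋ pq.1.1) (ℋ pq.1.2)))
    (p q : ℕ) (f g : H →ₗ[k] H)
    (hfp : ∀ x ∈ ℋ p, f x ∈ ℋ p) (hf0 : ∀ n, n ≠ p → ∀ x ∈ ℋ n, f x = 0)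
    (hg0 : ∀ n, n ≠ q → ∀ x ∈ ℋ n, g x = 0) :
    ∀ x ∈ ℋ (p + q),
      smashEnd k H f g x =
        (LinearMap.mul' k H ∘ₗ TensorProduct.map f g ∘ₗ Coalgebra.comul (R := k)) x := by
  intro x hx
  rw [smashEnd_eq_smashPairing_comp]
  exact smashPairing_comp_rTensor_eqOn ℋ hconn hcomul hfp hf0 hg0 (hcomul (p + q) x hx)

/-- for a graded connected Hopf algebra `H` and endomorphisms `f`, `g`
concentrated in degrees `p` and `q`, the component of `f # g` in `End(H_{p+q})` is the
convolution `f * g = m ∘ (f ⊗ g) ∘ Δ`. -/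
theorem smash_top_component_eq_convolution (k H : Type*) [Field k] [Semiring H]
    [HopfAlgebra k H] (ℋ : ℕ → Submodule k H) [GradedAlgebra ℋ]
    (hconn : ℋ 0 = (1 : Submodule k H))
    (hcomul : ∀ (n : ℕ), ∀ x ∈ ℋ n,
      Coalgebra.comul (R := k) x ∈
        ⨆ pq : {pq : ℕ × ℕ // pq.1 + pq.2 = n},
          LinearMap.range (TensorProduct.mapIncl (ℋ pq.1.1) (ℋ pq.1.2)))
    (p q : ℕ) (f g : H →ₗ[k] H)
    (hfp : ∀ x ∈ ℋ p, f x ∈ ℋ p) (hf0 : ∀ n, n ≠ p → ∀ x ∈ ℋ n, f x = 0)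
    (hgq : ∀ x ∈ ℋ q, g x ∈ ℋ q) (hg0 : ∀ n, n ≠ q → ∀ x ∈ ℋ n, g x = 0) :
    ∀ x ∈ ℋ (p + q),
      smashEnd k H f g x =
        (LinearMap.mul' k H ∘ₗ TensorProduct.map f g ∘ₗ Coalgebra.comul (R := k)) x :=
  smash_top_component_eq_convolution_general k H ℋ hconn hcomul p q f g hfp hf0 hg0
end

section
/- Let H = ⊕_{n≥0} H_n be a graded connected Hopf algebra and f, g ∈ End(H_n) endomorphisms concentrated in the same degree n. Then the component of the smash product f # g in End(H_n) equals the composition g ∘ f. -/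
open TensorProduct

section Aux

variable {k H : Type*} [Field k] [Semiring H] [HopfAlgebra k H]
variable (ℋ : ℕ → Submodule k H)

/-- The part of `H ⊗ H` in degrees `(p, q)` with `p + q = n` and `p ≠ n`. -/
noncomputable def lowPart (n : ℕ) : Submodule k (H ⊗[k] H) :=
  ⨆ pq : {pq : ℕ × ℕ // pq.1 + pq.2 = n ∧ pq.1 ≠ n},
    LinearMap.range (TensorProduct.mapIncl (ℋ pq.1.1) (ℋ pq.1.2))

lemma lowPart_apply_eq_zero {M : Type*} [AddCommMonoid M] [Module k M]
    {n : ℕ} {e : H ⊗[k] H} (he : e ∈ lowPart ℋ n) (Φ : H ⊗[k] H →ₗ[k] M)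
    (hΦ : ∀ p q, p + q = n → p ≠ n → ∀ a ∈ ℋ p, ∀ b ∈ ℋ q, Φ (a ⊗ₜ[k] b) = 0) :
    Φ e = 0 := by
  refine Submodule.iSup_induction (motive := fun t => Φ t = 0) _ he ?_ (map_zero Φ) ?_
  · rintro ⟨⟨p, q⟩, hpq, hp⟩ t ⟨u, rfl⟩
    induction u using TensorProduct.induction_on with
    | zero => simp
    | tmul a b =>
      simpa [TensorProduct.mapIncl] using hΦ p q hpq hp a a.2 b b.2
    | add u v hu hv =>
      simp only [TensorProduct.mapIncl] at hu hv ⊢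
      simp [map_add, hu, hv]
  · intro a b ha hb; simp [map_add, ha, hb]

lemma comul_structure [GradedAlgebra ℋ] (hconn : ℋ 0 = (1 : Submodule k H))
    (hcomul : ∀ (m : ℕ), ∀ x ∈ ℋ m, Coalgebra.comul (R := k) x ∈
        ⨆ pq : {pq : ℕ × ℕ // pq.1 + pq.2 = m},
          LinearMap.range (TensorProduct.mapIncl (ℋ pq.1.1) (ℋ pq.1.2)))
    {n : ℕ} {x : H} (hx : x ∈ ℋ n) :
    ∃ e ∈ lowPart ℋ n, Coalgebra.comul (R := k) x = x ⊗ₜ[k] (1 : H) + e := by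
  have h1 : ∃ z ∈ ℋ n, ∃ e ∈ lowPart ℋ n,
      Coalgebra.comul (R := k) x = z ⊗ₜ[k] (1 : H) + e := by
    refine Submodule.iSup_induction
      (motive := fun t => ∃ z ∈ ℋ n, ∃ e ∈ lowPart ℋ n, t = z ⊗ₜ[k] (1 : H) + e)
      _ (hcomul n x hx) ?_ ⟨0, zero_mem _, 0, zero_mem _, by simp⟩ ?_
    · rintro ⟨⟨p, q⟩, hpq⟩ t ⟨u, rfl⟩
      by_cases hp : p = n
      · have hq : q = 0 := by omega
        subst hq; subst hp
        have key : ∃ z ∈ ℋ p, TensorProduct.mapIncl (ℋ p) (ℋ 0) u = z ⊗ₜ[k] (1 : H) := by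
          induction u using TensorProduct.induction_on with
          | zero => exact ⟨0, zero_mem _, by simp⟩
          | tmul a b =>
            have hb1 : (b : H) ∈ ℋ 0 := b.2
            obtain ⟨c, hc⟩ := Submodule.mem_one.mp ((SetLike.ext_iff.mp hconn _).mp hb1)
            refine ⟨c • (a : H), Submodule.smul_mem _ _ a.2, ?_⟩
            have hb : (b : H) = c • (1 : H) := by
              rw [← hc, Algebra.algebraMap_eq_smul_one]
            rw [TensorProduct.mapIncl, TensorProduct.map_tmul]
            simp only [Submodule.subtype_apply]
            rw [hb, TensorProduct.tmul_smul, TensorProduct.smul_tmul']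
          | add u v hu hv =>
            obtain ⟨z1, hz1, h1⟩ := hu
            obtain ⟨z2, hz2, h2⟩ := hv
            exact ⟨z1 + z2, add_mem hz1 hz2, by
              rw [map_add, h1, h2, TensorProduct.add_tmul]⟩
        obtain ⟨z, hz, hz'⟩ := key
        exact ⟨z, hz, 0, zero_mem _, by rw [hz', add_zero]⟩
      · exact ⟨0, zero_mem _, _, Submodule.mem_iSup_of_mem ⟨⟨p, q⟩, hpq, hp⟩ ⟨u, rfl⟩, by simp⟩
    · rintro a b ⟨z1, hz1, e1, he1, rfl⟩ ⟨z2, hz2, e2, he2, rfl⟩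
      exact ⟨z1 + z2, add_mem hz1 hz2, e1 + e2, add_mem he1 he2, by
        rw [TensorProduct.add_tmul, add_add_add_comm]⟩
  obtain ⟨z, hz, e, he, heq⟩ := h1
  set L : H ⊗[k] H →ₗ[k] H :=
    (TensorProduct.rid k H).toLinearMap ∘ₗ LinearMap.lTensor H (Coalgebra.counit (R := k))
    with hL
  have hLx : L (Coalgebra.comul (R := k) x) = x := by
    simp [hL, Coalgebra.lTensor_counit_comul]
  have hLz : L (z ⊗ₜ[k] (1 : H)) = z := by
    simp [hL]
  have hLe : L e ∈ ⨆ j : {j : ℕ // j ≠ n}, ℋ (j : ℕ) := by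
    refine Submodule.iSup_induction
      (motive := fun t => L t ∈ ⨆ j : {j : ℕ // j ≠ n}, ℋ (j : ℕ)) _ he ?_ (by simp) ?_
    · rintro ⟨⟨p, q⟩, hpq, hp⟩ t ⟨u, rfl⟩
      induction u using TensorProduct.induction_on with
      | zero => simp
      | tmul a b =>
        refine Submodule.mem_iSup_of_mem ⟨p, hp⟩ ?_
        have h : L ((a : H) ⊗ₜ[k] (b : H)) = Coalgebra.counit (R := k) (b : H) • (a : H) := by
          simp [hL]
        simpa [TensorProduct.mapIncl, h] using Submodule.smul_mem _ _ a.2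
      | add u v hu hv =>
        simp only [TensorProduct.mapIncl] at hu hv ⊢
        simpa [map_add] using add_mem hu hv
    · intro a b ha hb; simpa [map_add] using add_mem ha hb
  have hw : ((DirectSum.decompose ℋ (L e)) n : H) = 0 := by
    refine Submodule.iSup_induction
      (motive := fun t => ((DirectSum.decompose ℋ t) n : H) = 0) _ hLe ?_ ?_ ?_
    · rintro ⟨j, hj⟩ t ht
      exact DirectSum.decompose_of_mem_ne ℋ ht hj
    · show ((DirectSum.decompose ℋ (0 : H)) n : H) = 0
      rw [DirectSum.decompose_zero]; simp
    · intro a b ha hb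
      rw [DirectSum.decompose_add, DirectSum.add_apply, Submodule.coe_add, ha, hb, add_zero]
  have hxz : x = z + L e := by
    have := congrArg L heq
    rw [hLx, map_add, hLz] at this
    exact this
  have hzx : x = z := by
    have h1 : ((DirectSum.decompose ℋ x) n : H) = x := DirectSum.decompose_of_mem_same ℋ hx
    have h2 : ((DirectSum.decompose ℋ z) n : H) = z := DirectSum.decompose_of_mem_same ℋ hz
    calc x = ((DirectSum.decompose ℋ x) n : H) := h1.symm
    _ = ((DirectSum.decompose ℋ (z + L e)) n : H) := by rw [← hxz]
    _ = z := by
        rw [DirectSum.decompose_add, DirectSum.add_apply, Submodule.coe_add, h2, hw, add_zero]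
  exact ⟨e, he, hzx ▸ heq⟩

end Aux

/-- for a graded connected Hopf algebra `H` and endomorphisms `f`, `g` both
concentrated in the same degree `n`, the component of `f # g` in `End(Hₙ)` is the
composition `g ∘ f`. -/
theorem smash_bottom_component_eq_composition (k H : Type*) [Field k] [Semiring H]
    [HopfAlgebra k H] (ℋ : ℕ → Submodule k H) [GradedAlgebra ℋ]
    (hconn : ℋ 0 = (1 : Submodule k H))
    (hcomul : ∀ (m : ℕ), ∀ x ∈ ℋ m,
      Coalgebra.comul (R := k) x ∈
        ⨆ pq : {pq : ℕ × ℕ // pq.1 + pq.2 = m},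
          LinearMap.range (TensorProduct.mapIncl (ℋ pq.1.1) (ℋ pq.1.2)))
    (n : ℕ) (f g : H →ₗ[k] H)
    (hfp : ∀ x ∈ ℋ n, f x ∈ ℋ n) (hf0 : ∀ m, m ≠ n → ∀ x ∈ ℋ m, f x = 0)
    (hgq : ∀ x ∈ ℋ n, g x ∈ ℋ n) (hg0 : ∀ m, m ≠ n → ∀ x ∈ ℋ m, g x = 0) :
    ∀ x ∈ ℋ n, smashEnd k H f g x = g (f x) := by
  intro x hx
  obtain ⟨e, he, hΔx⟩ := comul_structure ℋ hconn hcomul hx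
  obtain ⟨e', he', hΔfx⟩ := comul_structure ℋ hconn hcomul (hfp x hx)
  have hre : LinearMap.rTensor H f e = 0 := by
    refine lowPart_apply_eq_zero ℋ he (LinearMap.rTensor H f) ?_
    intro p q hpq hp a ha b hb
    rw [LinearMap.rTensor_tmul, hf0 p hp a ha, TensorProduct.zero_tmul]
  set Ψ : (H ⊗[k] H) ⊗[k] H →ₗ[k] H :=
    LinearMap.mul' k H ∘ₗ LinearMap.lTensor H g ∘ₗ LinearMap.lTensor H (LinearMap.mul' k H) ∘ₗ
      cyclicMap k H with hΨ
  have expand : smashEnd k H f g x =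
      Ψ (LinearMap.rTensor H ((Coalgebra.comul (R := k)) ∘ₗ f)
        (Coalgebra.comul (R := k) x)) := by
    simp [smashEnd, smashOf, hΨ, LinearMap.comp_apply]
  rw [expand, hΔx, map_add]
  have h2 : LinearMap.rTensor H ((Coalgebra.comul (R := k)) ∘ₗ f) e = 0 := by
    rw [LinearMap.rTensor_comp, LinearMap.comp_apply, hre, map_zero]
  have hcf : ((Coalgebra.comul (R := k)) ∘ₗ f) x = Coalgebra.comul (R := k) (f x) := rfl
  rw [h2, add_zero, LinearMap.rTensor_tmul, hcf, hΔfx, TensorProduct.add_tmul, map_add]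
  have t1 : Ψ ((f x ⊗ₜ[k] (1 : H)) ⊗ₜ[k] (1 : H)) = g (f x) := by
    simp [hΨ, cyclicMap, LinearMap.mul'_apply]
  have t2 : Ψ (e' ⊗ₜ[k] (1 : H)) = 0 := by
    have h := lowPart_apply_eq_zero ℋ he'
      (Ψ ∘ₗ (TensorProduct.mk k (H ⊗[k] H) H).flip 1) ?_
    · simpa using h
    · intro p q hpq hp a ha b hb
      simp [hΨ, cyclicMap, LinearMap.mul'_apply, hg0 p hp a ha]
  rw [t1, t2, add_zero]
end

section
/- For permutations σ ∈ S_p and τ ∈ S_q, the convolution in the Malvenuto–Reutenauer algebra satisfies σ * τ = Σ_{ξ ∈ Sh(p,q)} ξ ∘ (σ × τ), where Sh(p,q) = {ξ ∈ S_{p+q} : ξ(1)<⋯<ξ(p) and ξ(p+1)<⋯<ξ(p+q)} and (σ×τ)(i) = σ(i) for 1≤i≤p, (σ×τ)(i) = τ(i−p)+p for p+1≤i≤p+q. Equivalently, viewing permutations as endomorphisms of tensor powers of an infinite-dimensional vector space V acting on the right by place permutation, the convolution product m∘(σ⊗τ)∘Δ on the tensor algebra T(V) equals this sum of permutations. -/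
open TensorProduct DirectSum Equiv
open scoped TensorProduct

noncomputable section

variable (k V : Type*) [Field k] [AddCommGroup V] [Module k V]

/-- The (right) place-permutation action of `σ ∈ S_n` on the `n`-th tensor power:
`v₁ ⊗ ⋯ ⊗ vₙ ↦ v_{σ(1)} ⊗ ⋯ ⊗ v_{σ(n)}`. -/
def placePerm {n : ℕ} (σ : Perm (Fin n)) : (⨂[k]^n V) →ₗ[k] ⨂[k]^n V :=
  (PiTensorProduct.reindex k (fun _ : Fin n => V) σ.symm).toLinearMap

/-- The embedding of `End(V^{⊗n})` into the graded endomorphisms of the tensor algebra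
`T(V) = ⊕ₙ V^{⊗n}` (extension by zero outside degree `n`). -/
def hatEnd {n : ℕ} (f : (⨂[k]^n V) →ₗ[k] ⨂[k]^n V) :
    TensorAlgebra k V →ₗ[k] TensorAlgebra k V :=
  TensorAlgebra.equivDirectSum.symm.toLinearMap ∘ₗ
    (DirectSum.lof k ℕ (fun i => ⨂[k]^i V) n) ∘ₗ f ∘ₗ
      (DirectSum.component k ℕ (fun i => ⨂[k]^i V) n) ∘ₗ
        TensorAlgebra.equivDirectSum.toLinearMap

/-- The coproduct of the tensor Hopf algebra `T(V)`: the unique algebra map with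
`Δ(v) = v ⊗ 1 + 1 ⊗ v` for `v ∈ V`. -/
def tensorComul : TensorAlgebra k V →ₐ[k] TensorAlgebra k V ⊗[k] TensorAlgebra k V :=
  TensorAlgebra.lift k
    (((TensorProduct.mk k (TensorAlgebra k V) (TensorAlgebra k V)).flip 1) ∘ₗ
        TensorAlgebra.ι k +
      (TensorProduct.mk k (TensorAlgebra k V) (TensorAlgebra k V) 1) ∘ₗ TensorAlgebra.ι k)

/-- Transport of a permutation along an equality of indices. -/
def permCast {m n : ℕ} (h : m = n) (σ : Perm (Fin m)) : Perm (Fin n) :=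
  (finCongr h).permCongr σ

/-- The parabolic product `σ × τ` of permutations:
`(σ×τ)(i) = σ(i)` for `i ≤ p` and `τ(i-p)+p` for `i > p`. -/
def parabMul {p q : ℕ} (σ : Perm (Fin p)) (τ : Perm (Fin q)) : Perm (Fin (p + q)) :=
  finSumFinEquiv.permCongr (Equiv.sumCongr σ τ)

open scoped Classical in
/-- The set of `(u,v)`-shuffles: permutations increasing on the first `u` and on the
last `v` positions. -/
def shuffleFinset (u v : ℕ) : Finset (Perm (Fin (u + v))) :=
  Finset.univ.filter fun ξ =>
    (∀ i j : Fin (u + v), i < j → (j : ℕ) < u → ξ i < ξ j) ∧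
      ∀ i j : Fin (u + v), i < j → u ≤ (i : ℕ) → ξ i < ξ j

/-- The maximal-length shuffle `β_{u,v} ∈ Sh(u,v)`, sending `{1,…,u}` to `{v+1,…,v+u}`
and `{u+1,…,u+v}` to `{1,…,v}` order-preservingly. -/
def maxShuffle (u v : ℕ) : Perm (Fin (u + v)) :=
  (finAddFlip : Fin (u + v) ≃ Fin (v + u)).trans (finCongr (Nat.add_comm v u))

section Aux
variable {k V}

/-- selected sublist -/
def selList {α : Type*} {n : ℕ} (c : Fin n → Bool) (v : Fin n → α) : List α :=
  ((List.finRange n).filter c).map v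

theorem filter_length_add {n : ℕ} (c : Fin n → Bool) :
    ((List.finRange n).filter c).length +
      ((List.finRange n).filter (fun i => !(c i))).length = n := by
  have h := (List.filter_append_perm c (List.finRange n)).length_eq
  simpa [List.length_append] using h

theorem selList_cons {α : Type*} {n : ℕ} (b : Bool) (c : Fin n → Bool) (x : α)
    (v : Fin n → α) :
    selList (Fin.cons b c) (Fin.cons x v) =
      (if b then [x] else []) ++ selList c v := by
  have h2 : ((Fin.cons b c : Fin (n+1) → Bool) ∘ Fin.succ) = c := by
    funext i; simp
  have h3 : ((Fin.cons x v : Fin (n+1) → α) ∘ Fin.succ) = v := by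
    funext i; simp
  simp only [selList, List.finRange_succ, List.filter_cons, List.filter_map, h2]
  have h1 : (Fin.cons b c : Fin (n+1) → Bool) 0 = b := rfl
  rw [h1]
  cases b
  · simp [List.map_map, h3]
  · simp [List.map_map, h3]

theorem listProd_ofFn {m : ℕ} (w : Fin m → V) :
    ((List.ofFn w).map (TensorAlgebra.ι k)).prod = TensorAlgebra.tprod k V m w := by
  rw [TensorAlgebra.tprod_apply, List.map_ofFn]
  simp [Function.comp_def]

theorem listProd_get (l : List V) :
    (l.map (TensorAlgebra.ι k)).prod = TensorAlgebra.tprod k V l.length l.get := by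
  conv_lhs => rw [← List.ofFn_get l]
  rw [listProd_ofFn]

theorem tprod_mul_tprod' (p q : ℕ) (a : Fin p → V) (b : Fin q → V) :
    TensorAlgebra.tprod k V p a * TensorAlgebra.tprod k V q b =
      TensorAlgebra.tprod k V (p + q) (Fin.append a b) := by
  rw [← listProd_ofFn, ← listProd_ofFn, ← listProd_ofFn, List.ofFn_fin_append,
    List.map_append, List.prod_append]

theorem hatEnd_apply_tprod_ne {m n : ℕ} (h : m ≠ n) (f : (⨂[k]^n V) →ₗ[k] ⨂[k]^n V)
    (v : Fin m → V) : hatEnd k V f (TensorAlgebra.tprod k V m v) = 0 := by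
  simp only [hatEnd, LinearMap.comp_apply, AlgEquiv.toLinearMap_apply,
    TensorAlgebra.equivDirectSum_apply, TensorAlgebra.toDirectSum_tensorPower_tprod,
    ← DirectSum.lof_eq_of k, DirectSum.component.of]
  rw [dif_neg h]
  simp

theorem hatEnd_apply_tprod_same {n : ℕ} (f : (⨂[k]^n V) →ₗ[k] ⨂[k]^n V)
    (v : Fin n → V) :
    hatEnd k V f (TensorAlgebra.tprod k V n v) =
      TensorAlgebra.ofDirectSum
        (DirectSum.of (fun i => ⨂[k]^i V) n (f (PiTensorProduct.tprod k v))) := by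
  simp only [hatEnd, LinearMap.comp_apply, AlgEquiv.toLinearMap_apply,
    TensorAlgebra.equivDirectSum_apply, TensorAlgebra.toDirectSum_tensorPower_tprod,
    ← DirectSum.lof_eq_of k, DirectSum.component.of,
    TensorAlgebra.equivDirectSum_symm_apply]
  simp

theorem hatEnd_placePerm_apply_tprod {n : ℕ} (π : Perm (Fin n)) (v : Fin n → V) :
    hatEnd k V (placePerm k V π) (TensorAlgebra.tprod k V n v) =
      TensorAlgebra.tprod k V n (fun i => v (π i)) := by
  rw [hatEnd_apply_tprod_same]
  have : placePerm k V π (PiTensorProduct.tprod k v) =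
      PiTensorProduct.tprod k (fun i => v (π i)) := by
    simp [placePerm, PiTensorProduct.reindex_tprod]
  rw [this, TensorAlgebra.ofDirectSum_of_tprod]

end Aux

section Comul
variable {k V}

theorem notCons {n : ℕ} (b : Bool) (c : Fin n → Bool) :
    (fun i => !(Fin.cons (α := fun _ => Bool) b c i)) = Fin.cons (α := fun _ => Bool) (!b) (fun i => !(c i)) := by
  funext i
  induction i using Fin.cases <;> simp

theorem selList_cons' {α : Type*} {n : ℕ} (b : Bool) (c : Fin n → Bool)
    (v : Fin (n+1) → α) :
    selList (Fin.cons b c) v = (if b then [v 0] else []) ++ selList c (fun i => v i.succ) := by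
  conv_lhs => rw [← Fin.cons_self_tail v]
  rw [selList_cons]
  rfl

theorem consEquiv_apply' {n : ℕ} (b : Bool) (c : Fin n → Bool) :
    (Fin.consEquiv (fun _ => Bool)) (b, c) = Fin.cons b c := rfl

theorem tensorComul_ι (x : V) :
    tensorComul k V (TensorAlgebra.ι k x) =
      TensorAlgebra.ι k x ⊗ₜ[k] (1 : TensorAlgebra k V) +
        (1 : TensorAlgebra k V) ⊗ₜ[k] TensorAlgebra.ι k x := by
  simp [tensorComul, TensorAlgebra.lift_ι_apply]

theorem tensorComul_tprod (n : ℕ) (v : Fin n → V) :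
    tensorComul k V (TensorAlgebra.tprod k V n v) =
      ∑ c : Fin n → Bool,
        ((selList c v).map (TensorAlgebra.ι k)).prod ⊗ₜ[k]
          ((selList (fun i => !(c i)) v).map (TensorAlgebra.ι k)).prod := by
  induction n with
  | zero =>
      have h1 : TensorAlgebra.tprod k V 0 v = 1 := by
        rw [TensorAlgebra.tprod_apply]; simp
      rw [h1, map_one, Fintype.sum_unique]
      simp [selList, Algebra.TensorProduct.one_def]
  | succ n ih =>
      have hv : TensorAlgebra.tprod k V (n+1) v =
          TensorAlgebra.ι k (v 0) * TensorAlgebra.tprod k V n (fun i => v i.succ) := by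
        rw [TensorAlgebra.tprod_apply, TensorAlgebra.tprod_apply, List.ofFn_succ,
          List.prod_cons]
      rw [hv, map_mul, tensorComul_ι, ih (fun i => v i.succ)]
      rw [← Equiv.sum_comp (Fin.consEquiv (fun _ => Bool))]
      rw [Fintype.sum_prod_type, Fintype.sum_bool]
      simp only [consEquiv_apply', notCons, selList_cons', Bool.not_true, Bool.not_false,
        ↓reduceIte, Bool.false_eq_true, if_false, List.nil_append, List.singleton_append, List.map_cons,
        List.prod_cons, add_mul, Finset.mul_sum, Algebra.TensorProduct.tmul_mul_tmul,
        one_mul, mul_one]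
      rw [Finset.sum_add_distrib]
end Comul

section Shuffle
variable {p q : ℕ}

theorem mem_shuffleFinset {ξ : Perm (Fin (p + q))} :
    ξ ∈ shuffleFinset p q ↔
      (∀ i j : Fin (p + q), i < j → (j : ℕ) < p → ξ i < ξ j) ∧
        ∀ i j : Fin (p + q), i < j → p ≤ (i : ℕ) → ξ i < ξ j := by
  classical
  simp [shuffleFinset]

instance : IsAntisymm (Fin (p + q)) (· < ·) := ⟨fun a b h h' => (lt_asymm h h').elim⟩

/-- the boolean mask of a shuffle -/
def shuffleMask (p q : ℕ) (ξ : Perm (Fin (p + q))) : Fin (p + q) → Bool :=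
  fun i => decide ((ξ.symm i : ℕ) < p)

theorem parabMul_castAdd (σ : Perm (Fin p)) (τ : Perm (Fin q)) (j : Fin p) :
    parabMul σ τ (Fin.castAdd q j) = Fin.castAdd q (σ j) := by
  simp [parabMul, Equiv.permCongr_apply]

theorem parabMul_natAdd (σ : Perm (Fin p)) (τ : Perm (Fin q)) (j : Fin q) :
    parabMul σ τ (Fin.natAdd p j) = Fin.natAdd p (τ j) := by
  simp [parabMul, Equiv.permCongr_apply]

theorem filter_shuffleMask {ξ : Perm (Fin (p + q))} (hξ : ξ ∈ shuffleFinset p q) :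
    (List.finRange (p + q)).filter (shuffleMask p q ξ) =
      List.ofFn (fun j : Fin p => ξ (Fin.castAdd q j)) := by
  have h1 := (mem_shuffleFinset.mp hξ).1
  have sortedA : List.Pairwise (· < ·) ((List.finRange (p + q)).filter (shuffleMask p q ξ)) :=
    (List.pairwise_lt_finRange _).filter _
  have nodupA : ((List.finRange (p + q)).filter (shuffleMask p q ξ)).Nodup :=
    sortedA.imp (fun h => ne_of_lt h)
  have sortedB : List.Pairwise (· < ·) (List.ofFn fun j : Fin p => ξ (Fin.castAdd q j)) := by
    rw [List.pairwise_ofFn]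
    intro i j hij
    refine h1 _ _ ?_ ?_
    · rw [Fin.lt_def] at hij ⊢
      simpa using hij
    · simpa using j.isLt
  have nodupB : (List.ofFn fun j : Fin p => ξ (Fin.castAdd q j)).Nodup :=
    sortedB.imp (fun h => ne_of_lt h)
  refine List.Perm.eq_of_pairwise (fun _ _ _ _ h h' => (lt_asymm h h').elim) sortedA sortedB
    ((List.perm_ext_iff_of_nodup nodupA nodupB).mpr ?_)
  intro x
  simp only [List.mem_filter, List.mem_finRange, true_and, List.mem_ofFn, Set.mem_range,
    shuffleMask, decide_eq_true_eq]
  constructor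
  · intro hx
    refine ⟨⟨(ξ.symm x : ℕ), hx⟩, ?_⟩
    have hc : (Fin.castAdd q ⟨(ξ.symm x : ℕ), hx⟩) = ξ.symm x := by
      ext; simp
    rw [hc, Equiv.apply_symm_apply]
  · rintro ⟨j, rfl⟩
    rw [Equiv.symm_apply_apply]
    simpa using j.isLt

theorem filter_shuffleMask_not {ξ : Perm (Fin (p + q))} (hξ : ξ ∈ shuffleFinset p q) :
    (List.finRange (p + q)).filter (fun i => !(shuffleMask p q ξ i)) =
      List.ofFn (fun j : Fin q => ξ (Fin.natAdd p j)) := by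
  have h2 := (mem_shuffleFinset.mp hξ).2
  have sortedA : List.Pairwise (· < ·)
      ((List.finRange (p + q)).filter (fun i => !(shuffleMask p q ξ i))) :=
    (List.pairwise_lt_finRange _).filter _
  have nodupA := sortedA.imp (fun h => ne_of_lt h)
  have sortedB : List.Pairwise (· < ·) (List.ofFn fun j : Fin q => ξ (Fin.natAdd p j)) := by
    rw [List.pairwise_ofFn]
    intro i j hij
    refine h2 _ _ ?_ ?_
    · rw [Fin.lt_def] at hij ⊢
      simpa using hij
    · simp
  have nodupB := sortedB.imp (fun h => ne_of_lt h)
  refine List.Perm.eq_of_pairwise (fun _ _ _ _ h h' => (lt_asymm h h').elim) sortedA sortedB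
    ((List.perm_ext_iff_of_nodup nodupA nodupB).mpr ?_)
  intro x
  simp only [List.mem_filter, List.mem_finRange, true_and, List.mem_ofFn, Set.mem_range,
    shuffleMask, Bool.not_eq_true', decide_eq_false_iff_not, not_lt]
  constructor
  · intro hx
    have hlt : (ξ.symm x : ℕ) - p < q := by
      have := (ξ.symm x).isLt
      omega
    refine ⟨⟨(ξ.symm x : ℕ) - p, hlt⟩, ?_⟩
    have hc : (Fin.natAdd p ⟨(ξ.symm x : ℕ) - p, hlt⟩) = ξ.symm x := by
      ext; simp; omega
    rw [hc, Equiv.apply_symm_apply]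
  · rintro ⟨j, rfl⟩
    rw [Equiv.symm_apply_apply]
    simp

theorem shuffleMask_injOn {ξ₁ ξ₂ : Perm (Fin (p + q))} (h₁ : ξ₁ ∈ shuffleFinset p q)
    (h₂ : ξ₂ ∈ shuffleFinset p q) (h : shuffleMask p q ξ₁ = shuffleMask p q ξ₂) :
    ξ₁ = ξ₂ := by
  have hl : List.ofFn (fun j : Fin p => ξ₁ (Fin.castAdd q j)) =
      List.ofFn (fun j : Fin p => ξ₂ (Fin.castAdd q j)) := by
    rw [← filter_shuffleMask h₁, ← filter_shuffleMask h₂, h]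
  have hr : List.ofFn (fun j : Fin q => ξ₁ (Fin.natAdd p j)) =
      List.ofFn (fun j : Fin q => ξ₂ (Fin.natAdd p j)) := by
    rw [← filter_shuffleMask_not h₁, ← filter_shuffleMask_not h₂, h]
  rw [List.ofFn_inj] at hl hr
  ext i
  refine Fin.addCases (fun j => ?_) (fun j => ?_) i
  · exact congrFun hl j ▸ rfl
  · exact congrFun hr j ▸ rfl
end Shuffle

section MaskPerm
variable {p q : ℕ}

/-- the list underlying the shuffle associated to a mask -/
def maskList (p q : ℕ) (c : Fin (p + q) → Bool) : List (Fin (p + q)) :=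
  (List.finRange (p + q)).filter c ++ (List.finRange (p + q)).filter (fun i => !(c i))

theorem maskList_perm (c : Fin (p + q) → Bool) :
    List.Perm (maskList p q c) (List.finRange (p + q)) :=
  List.filter_append_perm _ _

theorem maskList_length (c : Fin (p + q) → Bool) : (maskList p q c).length = p + q := by
  rw [(maskList_perm c).length_eq, List.length_finRange]

theorem maskList_nodup (c : Fin (p + q) → Bool) : (maskList p q c).Nodup :=
  (maskList_perm c).nodup_iff.mpr (List.nodup_finRange _)

/-- the shuffle associated to a mask -/
def maskPerm (p q : ℕ) (c : Fin (p + q) → Bool) : Perm (Fin (p + q)) :=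
  Equiv.ofBijective (fun j => (maskList p q c).get (Fin.cast (maskList_length c).symm j))
    ((Finite.injective_iff_bijective).mp
      (fun a b hab => by
        have := (List.nodup_iff_injective_get.mp (maskList_nodup c)) hab
        exact Fin.cast_injective _ (by exact this)))

theorem maskPerm_apply (c : Fin (p + q) → Bool) (j : Fin (p + q)) :
    maskPerm p q c j = (maskList p q c).get (Fin.cast (maskList_length c).symm j) := rfl

theorem maskPerm_apply_lt (c : Fin (p + q) → Bool)
    (hc : ((List.finRange (p + q)).filter c).length = p) (j : Fin (p + q)) (hj : (j : ℕ) < p)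
    {h : (j : ℕ) < ((List.finRange (p + q)).filter c).length} :
    maskPerm p q c j = ((List.finRange (p + q)).filter c)[(j : ℕ)] := by
  rw [maskPerm_apply, List.get_eq_getElem]
  simp only [maskList, Fin.coe_cast]
  exact List.getElem_append_left h

theorem maskPerm_apply_ge (c : Fin (p + q) → Bool)
    (hc : ((List.finRange (p + q)).filter c).length = p) (j : Fin (p + q)) (hj : p ≤ (j : ℕ))
    {h : (j : ℕ) - p < ((List.finRange (p + q)).filter (fun i => !(c i))).length} :
    maskPerm p q c j = ((List.finRange (p + q)).filter (fun i => !(c i)))[(j : ℕ) - p] := by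
  rw [maskPerm_apply, List.get_eq_getElem]
  simp only [maskList, Fin.coe_cast]
  have h1 : ((List.finRange (p + q)).filter c).length ≤ (j : ℕ) := by omega
  rw [List.getElem_append_right (by exact h1)]
  congr 1
  show (j : ℕ) - _ = _
  omega

theorem maskPerm_mem_shuffleFinset (c : Fin (p + q) → Bool)
    (hc : ((List.finRange (p + q)).filter c).length = p) :
    maskPerm p q c ∈ shuffleFinset p q := by
  have hc' : ((List.finRange (p + q)).filter (fun i => !(c i))).length = q := by
    have := filter_length_add c
    omega
  rw [mem_shuffleFinset]
  constructor
  · intro i j hij hjp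
    have hip : (i : ℕ) < p := lt_trans hij hjp
    rw [maskPerm_apply_lt c hc i hip (h := by omega), maskPerm_apply_lt c hc j hjp (h := by omega)]
    have hs : List.Pairwise (· < ·) ((List.finRange (p + q)).filter c) :=
      (List.pairwise_lt_finRange _).filter _
    exact List.pairwise_iff_getElem.mp hs _ _ _ _ hij
  · intro i j hij hip
    have hjp : p ≤ (j : ℕ) := le_trans hip (le_of_lt hij)
    have hi2 : (i : ℕ) - p < q := by have := i.isLt; omega
    have hj2 : (j : ℕ) - p < q := by have := j.isLt; omega
    rw [maskPerm_apply_ge c hc i hip (h := by omega), maskPerm_apply_ge c hc j hjp (h := by omega)]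
    have hs : List.Pairwise (· < ·) ((List.finRange (p + q)).filter (fun i => !(c i))) :=
      (List.pairwise_lt_finRange _).filter _
    exact List.pairwise_iff_getElem.mp hs _ _ _ _ (by omega)

theorem shuffleMask_maskPerm (c : Fin (p + q) → Bool)
    (hc : ((List.finRange (p + q)).filter c).length = p) :
    shuffleMask p q (maskPerm p q c) = c := by
  have hc' : ((List.finRange (p + q)).filter (fun i => !(c i))).length = q := by
    have := filter_length_add c
    omega
  funext i
  obtain ⟨j, rfl⟩ := (maskPerm p q c).surjective i
  rw [shuffleMask, Equiv.symm_apply_apply]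
  by_cases hj : (j : ℕ) < p
  · rw [maskPerm_apply_lt c hc j hj (h := by omega)]
    have hmem : ((List.finRange (p + q)).filter c)[(j : ℕ)]'(by omega) ∈
        (List.finRange (p + q)).filter c := List.getElem_mem _
    rw [List.mem_filter] at hmem
    simp [hj, hmem.2]
  · rw [maskPerm_apply_ge c hc j (by omega) (h := by omega)]
    have hmem : ((List.finRange (p + q)).filter (fun i => !(c i)))[(j : ℕ) - p]'(by omega) ∈
        (List.finRange (p + q)).filter (fun i => !(c i)) := List.getElem_mem _
    rw [List.mem_filter] at hmem
    have := hmem.2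
    simp only [Bool.not_eq_true'] at this
    simp [hj, this]
end MaskPerm

/-- Malvenuto–Reutenauer: for `σ ∈ S_p` and `τ ∈ S_q`, viewed as
endomorphisms of the tensor Hopf algebra `T(V)` by place permutation, the convolution
`m ∘ (σ ⊗ τ) ∘ Δ` equals `Σ_{ξ ∈ Sh(p,q)} ξ ∘ (σ × τ)`. -/
theorem convolution_of_permutations [CharZero k] (hV : ¬ Module.Finite k V)
    (p q : ℕ) (σ : Perm (Fin p)) (τ : Perm (Fin q)) :
    LinearMap.mul' k (TensorAlgebra k V) ∘ₗ
        TensorProduct.map (hatEnd k V (placePerm k V σ)) (hatEnd k V (placePerm k V τ)) ∘ₗ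
          (tensorComul k V).toLinearMap =
      ∑ ξ ∈ shuffleFinset p q, hatEnd k V (placePerm k V (ξ * parabMul σ τ)) := by
  classical
  have key : ∀ (n : ℕ) (v : Fin n → V),
      LinearMap.mul' k (TensorAlgebra k V)
          (TensorProduct.map (hatEnd k V (placePerm k V σ)) (hatEnd k V (placePerm k V τ))
            (tensorComul k V (TensorAlgebra.tprod k V n v))) =
        ∑ ξ ∈ shuffleFinset p q,
          hatEnd k V (placePerm k V (ξ * parabMul σ τ)) (TensorAlgebra.tprod k V n v) := by
    intro n v
    rw [tensorComul_tprod, map_sum, map_sum]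
    simp only [TensorProduct.map_tmul, LinearMap.mul'_apply]
    have term_zero : ∀ c : Fin n → Bool,
        (((List.finRange n).filter c).length ≠ p ∨
          ((List.finRange n).filter (fun i => !(c i))).length ≠ q) →
        hatEnd k V (placePerm k V σ) (((selList c v).map (TensorAlgebra.ι k)).prod) *
          hatEnd k V (placePerm k V τ)
            (((selList (fun i => !(c i)) v).map (TensorAlgebra.ι k)).prod) = 0 := by
      intro c hc
      rcases hc with hc | hc
      · rw [listProd_get (l := selList c v),
          hatEnd_apply_tprod_ne (by simpa [selList] using hc), zero_mul]
      · rw [listProd_get (l := selList (fun i => !(c i)) v),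
          hatEnd_apply_tprod_ne (by simpa [selList] using hc), mul_zero]
    by_cases hn : n = p + q
    · subst hn
      have hres : ∑ c ∈ Finset.univ.filter (fun c : Fin (p + q) → Bool =>
            ((List.finRange (p + q)).filter c).length = p),
            (hatEnd k V (placePerm k V σ) (((selList c v).map (TensorAlgebra.ι k)).prod) *
              hatEnd k V (placePerm k V τ)
                (((selList (fun i => !(c i)) v).map (TensorAlgebra.ι k)).prod)) =
          ∑ c : Fin (p + q) → Bool,
            (hatEnd k V (placePerm k V σ) (((selList c v).map (TensorAlgebra.ι k)).prod) *
              hatEnd k V (placePerm k V τ)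
                (((selList (fun i => !(c i)) v).map (TensorAlgebra.ι k)).prod)) :=
        Finset.sum_filter_of_ne (fun c _ hne => by
          by_contra hcp
          exact hne (term_zero c (Or.inl hcp)))
      rw [← hres]
      simp only [hatEnd_placePerm_apply_tprod]
      refine (Finset.sum_bij (fun ξ _ => shuffleMask p q ξ) ?_ ?_ ?_ ?_).symm
      · intro ξ hξ
        simp only [Finset.mem_filter, Finset.mem_univ, true_and]
        rw [filter_shuffleMask hξ, List.length_ofFn]
      · intro ξ₁ h₁ ξ₂ h₂ h
        exact shuffleMask_injOn h₁ h₂ h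
      · intro c hc
        simp only [Finset.mem_filter, Finset.mem_univ, true_and] at hc
        exact ⟨maskPerm p q c, maskPerm_mem_shuffleFinset c hc, shuffleMask_maskPerm c hc⟩
      · intro ξ hξ
        have hA : selList (shuffleMask p q ξ) v =
            List.ofFn (fun j : Fin p => v (ξ (Fin.castAdd q j))) := by
          rw [selList, filter_shuffleMask hξ, List.map_ofFn]
          rfl
        have hB : selList (fun i => !(shuffleMask p q ξ i)) v =
            List.ofFn (fun j : Fin q => v (ξ (Fin.natAdd p j))) := by
          rw [selList, filter_shuffleMask_not hξ, List.map_ofFn]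
          rfl
        rw [hA, hB, listProd_ofFn, listProd_ofFn, hatEnd_placePerm_apply_tprod,
          hatEnd_placePerm_apply_tprod, tprod_mul_tprod']
        congr 1
        funext i
        refine Fin.addCases (fun j => ?_) (fun j => ?_) i
        · rw [Fin.append_left]
          simp [Equiv.Perm.mul_apply, parabMul_castAdd]
        · rw [Fin.append_right]
          simp [Equiv.Perm.mul_apply, parabMul_natAdd]
    · rw [Finset.sum_eq_zero, Finset.sum_eq_zero]
      · intro ξ _
        exact hatEnd_apply_tprod_ne hn _ v
      · intro c _
        by_cases hcp : ((List.finRange n).filter c).length = p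
        · refine term_zero c (Or.inr ?_)
          have := filter_length_add c
          omega
        · exact term_zero c (Or.inl hcp)
  have hmaps : (LinearMap.mul' k (TensorAlgebra k V) ∘ₗ
      TensorProduct.map (hatEnd k V (placePerm k V σ)) (hatEnd k V (placePerm k V τ)) ∘ₗ
        (tensorComul k V).toLinearMap) ∘ₗ
          (TensorAlgebra.ofDirectSum (R := k) (M := V)).toLinearMap =
      (∑ ξ ∈ shuffleFinset p q, hatEnd k V (placePerm k V (ξ * parabMul σ τ))) ∘ₗ
        (TensorAlgebra.ofDirectSum (R := k) (M := V)).toLinearMap := by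
    apply DirectSum.linearMap_ext
    intro n
    apply PiTensorProduct.ext
    apply MultilinearMap.ext
    intro v
    simp only [LinearMap.compMultilinearMap_apply, LinearMap.comp_apply,
      AlgHom.toLinearMap_apply, DirectSum.lof_eq_of, TensorAlgebra.ofDirectSum_of_tprod,
      LinearMap.sum_apply]
    exact key n v
  apply LinearMap.ext
  intro x
  have h := LinearMap.congr_fun hmaps (TensorAlgebra.toDirectSum x)
  simp only [LinearMap.comp_apply, AlgHom.toLinearMap_apply,
    TensorAlgebra.ofDirectSum_toDirectSum, LinearMap.sum_apply] at h ⊢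
  exact h
end
end

section
/- Suppose V is an infinite-dimensional vector space over a field of characteristic 0. Then the algebra of GL(V)-equivariant degree-preserving endomorphisms of the tensor algebra T(V) that vanish in all but finitely many degrees equals ⊕_{n≥0} k[S_n], where S_n acts on V^{⊗n} by place permutation: in each degree n, End_{GL(V)}(V^{⊗n}) is spanned by the permutation operators v_1⋯v_n ↦ v_{σ(1)}⋯v_{σ(n)} for σ ∈ S_n. -/
open TensorProduct Equiv
open scoped TensorProduct Classical

noncomputable section

variable (k V : Type*) [Field k] [AddCommGroup V] [Module k V]

/-- The diagonal action of an invertible linear map `g ∈ GL(V)` on the `n`-th tensor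
power of `V`. -/
def diagAction {n : ℕ} (g : V ≃ₗ[k] V) : (⨂[k]^n V) →ₗ[k] ⨂[k]^n V :=
  PiTensorProduct.map fun _ : Fin n => g.toLinearMap

namespace SchurWeylAux

variable {k V}
variable {ι : Type*}

lemma placePerm_tprod {n : ℕ} (σ : Perm (Fin n)) (v : Fin n → V) :
    placePerm k V σ (PiTensorProduct.tprod k v) = PiTensorProduct.tprod k (fun i => v (σ i)) := by
  simp [placePerm]

lemma diagAction_tprod {n : ℕ} (g : V ≃ₗ[k] V) (v : Fin n → V) :
    diagAction k V g (PiTensorProduct.tprod k v) = PiTensorProduct.tprod k (fun i => g (v i)) := by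
  simp [diagAction]

lemma placePerm_comm_diag {n : ℕ} (σ : Perm (Fin n)) (g : V ≃ₗ[k] V) :
    placePerm k V σ ∘ₗ diagAction k V g = diagAction k V g ∘ₗ placePerm k V σ := by
  apply PiTensorProduct.ext
  apply MultilinearMap.ext
  intro v
  simp [placePerm_tprod, diagAction_tprod]

/-- Diagonal scaling automorphism with unit scalars. -/
def scaleEquiv (e : Module.Basis ι k V) (t : ι → kˣ) : V ≃ₗ[k] V :=
  LinearEquiv.ofLinear (e.constr k fun i => (t i : k) • e i)
    (e.constr k fun i => (((t i)⁻¹ : kˣ) : k) • e i)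
    (by apply e.ext; intro i; simp [Module.Basis.constr_basis, smul_smul])
    (by apply e.ext; intro i; simp [Module.Basis.constr_basis, smul_smul])

lemma scaleEquiv_apply_basis (e : Module.Basis ι k V) (t : ι → kˣ) (i : ι) :
    scaleEquiv e t (e i) = (t i : k) • e i := by
  simp [scaleEquiv, Module.Basis.constr_basis]

lemma coord_scaleEquiv (e : Module.Basis ι k V) (t : ι → kˣ) (j : ι) (w : V) :
    e.coord j (scaleEquiv e t w) = (t j : k) * e.coord j w := by
  have : (e.coord j) ∘ₗ (scaleEquiv e t).toLinearMap = (t j : k) • e.coord j := by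
    apply e.ext
    intro i
    by_cases h : i = j <;>
      simp [scaleEquiv_apply_basis, Module.Basis.coord_apply, Module.Basis.repr_self_apply, h]
  simpa using LinearMap.congr_fun this w

/-- The coefficient functional attached to a multi-index `h`. -/
def lamd (e : Module.Basis ι k V) {n : ℕ} (h : Fin n → ι) : (⨂[k]^n V) →ₗ[k] k :=
  PiTensorProduct.lift
    ((MultilinearMap.mkPiAlgebra k (Fin n) k).compLinearMap (fun i => e.coord (h i)))

lemma lamd_tprod (e : Module.Basis ι k V) {n : ℕ} (h : Fin n → ι) (v : Fin n → V) :
    lamd e h (PiTensorProduct.tprod k v) = ∏ i, e.coord (h i) (v i) := by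
  simp [lamd]

lemma lamd_tprod_basis (e : Module.Basis ι k V) {n : ℕ} (h g : Fin n → ι) :
    lamd e h (PiTensorProduct.tprod k (fun i => e (g i))) = if g = h then 1 else 0 := by
  rw [lamd_tprod]
  by_cases hgh : g = h
  · subst hgh; simp [Module.Basis.coord_apply, Module.Basis.repr_self_apply]
  · rw [if_neg hgh]
    obtain ⟨i, hi⟩ := Function.ne_iff.mp hgh
    exact Finset.prod_eq_zero (Finset.mem_univ i)
      (by simp [Module.Basis.coord_apply, Module.Basis.repr_self_apply, hi])

lemma lamd_diag_scale (e : Module.Basis ι k V) (t : ι → kˣ) {n : ℕ} (h : Fin n → ι) :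
    (lamd e h) ∘ₗ diagAction k V (scaleEquiv e t) = (∏ i, (t (h i) : k)) • lamd e h := by
  apply PiTensorProduct.ext
  apply MultilinearMap.ext
  intro v
  simp only [LinearMap.compMultilinearMap_apply, LinearMap.comp_apply, diagAction_tprod,
    lamd_tprod, LinearMap.smul_apply, smul_eq_mul, coord_scaleEquiv, Finset.prod_mul_distrib]

lemma spanBasisTensors (e : Module.Basis ι k V) (n : ℕ) :
    Submodule.span k (Set.range fun g : Fin n → ι =>
      PiTensorProduct.tprod k (fun i => e (g i))) = (⊤ : Submodule k (⨂[k]^n V)) := by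
  rw [eq_top_iff, ← PiTensorProduct.span_tprod_eq_top, Submodule.span_le]
  rintro x ⟨v, rfl⟩
  have hv : (fun i => v i) = fun i => ∑ j ∈ (e.repr (v i)).support, (e.repr (v i)) j • e j := by
    funext i
    conv_lhs => rw [← e.linearCombination_repr (v i)]
    rw [Finsupp.linearCombination_apply, Finsupp.sum]
  have := (PiTensorProduct.tprod k (s := fun _ : Fin n => V)).map_sum_finset
    (fun i j => (e.repr (v i)) j • e j) (fun i => (e.repr (v i)).support)
  rw [show (PiTensorProduct.tprod k) v = PiTensorProduct.tprod k
    (fun i => ∑ j ∈ (e.repr (v i)).support, (e.repr (v i)) j • e j) from by rw [← hv], this]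
  refine Submodule.sum_mem _ fun r _ => ?_
  rw [MultilinearMap.map_smul_univ]
  exact Submodule.smul_mem _ _ (Submodule.subset_span ⟨r, rfl⟩)

lemma spanIndep [Infinite ι] (e : Module.Basis ι k V) (n : ℕ) :
    Submodule.span k {x : ⨂[k]^n V | ∃ v : Fin n → V,
      LinearIndependent k v ∧ PiTensorProduct.tprod k v = x} = ⊤ := by
  rw [eq_top_iff, ← PiTensorProduct.span_tprod_eq_top, Submodule.span_le]
  rintro x ⟨v, rfl⟩
  set T : Finset ι := Finset.univ.biUnion (fun i : Fin n => (e.repr (v i)).support) with hT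
  have hTc : (↑T : Set ι)ᶜ.Infinite := T.finite_toSet.infinite_compl
  haveI : Infinite ↥((↑T : Set ι)ᶜ) := hTc.to_subtype
  set c : Fin n → ι := fun i => ((Infinite.natEmbedding ↥((↑T : Set ι)ᶜ)) i.val : ι) with hc
  have hcinj : Function.Injective c := fun a b hab => by
    have := (Infinite.natEmbedding ↥((↑T : Set ι)ᶜ)).injective (Subtype.ext hab)
    exact Fin.val_injective this
  have hcT : ∀ i, c i ∉ T := fun i => ((Infinite.natEmbedding ↥((↑T : Set ι)ᶜ)) i.val).2
  have hcv : ∀ i j, e.repr (v i) (c j) = 0 := by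
    intro i j
    by_contra hne
    exact hcT j (Finset.mem_biUnion.mpr ⟨i, Finset.mem_univ i,
      Finsupp.mem_support_iff.mpr hne⟩)
  set m : Fin n → V := fun i => v i + e (c i) with hm
  set m' : Fin n → V := fun i => -(e (c i)) with hm'
  have hmm : m + m' = v := by funext i; simp [hm, hm']
  have expand : PiTensorProduct.tprod k v = ∑ S : Finset (Fin n),
      PiTensorProduct.tprod k (S.piecewise m m') := by
    rw [← hmm]
    exact (PiTensorProduct.tprod k (s := fun _ : Fin n => V)).map_add_univ m m'
  rw [expand]
  refine Submodule.sum_mem _ fun S _ => ?_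
  refine Submodule.subset_span ⟨S.piecewise m m', ?_, rfl⟩
  -- linear independence of the piecewise family
  rw [Fintype.linearIndependent_iff]
  intro a ha j
  have key : ∀ i, e.coord (c j) (S.piecewise m m' i) =
      if i = j then (if i ∈ S then 1 else -1) else 0 := by
    intro i
    by_cases hij : i = j
    · subst hij
      by_cases hiS : i ∈ S <;>
        simp [Finset.piecewise, hiS, hm, hm', Module.Basis.coord_apply, hcv, Module.Basis.repr_self_apply]
    · by_cases hiS : i ∈ S <;>
        simp [Finset.piecewise, hiS, hij, hm, hm', Module.Basis.coord_apply, hcv,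
          Module.Basis.repr_self_apply, hcinj.eq_iff]
  have := congrArg (e.coord (c j)) ha
  rw [map_sum, map_zero] at this
  simp only [map_smul, key, smul_eq_mul, mul_ite, mul_one, mul_zero] at this
  rw [Finset.sum_ite_eq' Finset.univ j] at this
  simp only [Finset.mem_univ, if_true] at this
  by_cases hjS : j ∈ S
  · simpa [hjS] using this
  · simp only [hjS, if_false, mul_neg, mul_one, neg_eq_zero] at this
    exact this

lemma orbit_lemma [Infinite ι] (e : Module.Basis ι k V) {n : ℕ} (f₀ : Fin n ↪ ι)
    (v : Fin n → V) (hv : LinearIndependent k v) :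
    ∃ g : V ≃ₗ[k] V, ∀ i, g (e (f₀ i)) = v i := by
  have hvinj : Function.Injective v := hv.injective
  have hs : LinearIndepOn k id (Set.range v) := (linearIndepOn_id_range_iff hvinj).mpr hv
  let b₂ : Module.Basis ↥(hs.extend (Set.subset_univ _)) k V := Module.Basis.extend hs
  have hsub : Set.range v ⊆ hs.extend (Set.subset_univ _) := hs.subset_extend _
  let f : ↥(Set.range ⇑f₀) ↪ ↥(hs.extend (Set.subset_univ _)) :=
    ⟨fun x => ⟨v ((Equiv.ofInjective f₀ f₀.injective).symm x), hsub (Set.mem_range_self _)⟩,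
      fun a b hab => by
        have := hvinj (Subtype.ext_iff.mp hab)
        exact (Equiv.ofInjective f₀ f₀.injective).symm.injective this⟩
  have hlt : Cardinal.mk ↥(Set.range ⇑f₀) < Cardinal.mk ι := by
    exact lt_of_lt_of_le (Set.Finite.lt_aleph0 (Set.finite_range ⇑f₀))
      (Cardinal.infinite_iff.mp ‹Infinite ι›)
  obtain ⟨G, hG⟩ := Cardinal.extend_function_of_lt f hlt ⟨e.indexEquiv b₂⟩
  refine ⟨e.equiv b₂ G, fun i => ?_⟩
  have h1 : G (f₀ i) = f ⟨f₀ i, Set.mem_range_self i⟩ := hG ⟨f₀ i, Set.mem_range_self i⟩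
  rw [Module.Basis.equiv_apply, h1]
  have h2 : (Equiv.ofInjective f₀ f₀.injective).symm ⟨f₀ i, Set.mem_range_self i⟩ = i := by
    rw [Equiv.symm_apply_eq]
    rfl
  simp only [f, Function.Embedding.coeFn_mk, h2, b₂]
  exact (Module.Basis.extend_apply_self hs _).trans (congrArg v h2)

end SchurWeylAux

open SchurWeylAux

/-- stable Schur–Weyl duality: if `V` is infinite dimensional over a field
of characteristic `0`, then in each degree `n` the `GL(V)`-equivariant endomorphisms of
`V^{⊗n}` are exactly the linear span of the place-permutation operators. -/
theorem schur_weyl [CharZero k] (hV : ¬ Module.Finite k V) (n : ℕ) :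
    {φ : (⨂[k]^n V) →ₗ[k] ⨂[k]^n V |
        ∀ g : V ≃ₗ[k] V, φ ∘ₗ diagAction k V g = diagAction k V g ∘ₗ φ} =
      ↑(Submodule.span k (Set.range fun σ : Perm (Fin n) => placePerm k V σ)) := by
  ext φ
  simp only [Set.mem_setOf_eq, SetLike.mem_coe]
  constructor
  · intro hφ
    set ι := ↥(Module.Basis.ofVectorSpaceIndex k V)
    set e : Module.Basis ι k V := Module.Basis.ofVectorSpace k V with he
    haveI hι : Infinite ι := by
      by_contra h
      rw [not_infinite_iff_finite] at h
      exact hV (Module.Finite.of_basis e)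
    set f₀ : Fin n ↪ ι := Fin.valEmbedding.trans (Infinite.natEmbedding ι) with hf₀
    set x₀ : ⨂[k]^n V := PiTensorProduct.tprod k (fun i => e (f₀ i)) with hx₀
    have hx : φ x₀ ∈ Submodule.span k (Set.range fun g : Fin n → ι =>
        PiTensorProduct.tprod k (fun i => e (g i))) := by
      rw [spanBasisTensors]; exact Submodule.mem_top
    obtain ⟨cc, hcc⟩ := Finsupp.mem_span_range_iff_exists_finsupp.mp hx
    have hlam : ∀ h : Fin n → ι, lamd e h (φ x₀) = cc h := by
      intro h
      rw [← hcc, map_finsuppSum]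
      simp only [map_smul, lamd_tprod_basis, smul_eq_mul, mul_ite, mul_one, mul_zero]
      rw [Finsupp.sum_ite_eq' cc h (fun _ a => a)]
      split_ifs with hmem
      · rfl
      · exact (Finsupp.notMem_support_iff.mp hmem).symm
    have hprod : ∀ h ∈ cc.support, ∀ t : ι → kˣ,
        (∏ i, (t (f₀ i) : k)) = ∏ i, (t (h i) : k) := by
      intro h hmem t
      have hcomm := hφ (scaleEquiv e t)
      have h1 : diagAction k V (scaleEquiv e t) x₀ = (∏ i, (t (f₀ i) : k)) • x₀ := by
        rw [hx₀, diagAction_tprod,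
          show (fun i => scaleEquiv e t (e (f₀ i))) = fun i => (t (f₀ i) : k) • e (f₀ i) from
            funext fun i => scaleEquiv_apply_basis e t (f₀ i)]
        exact MultilinearMap.map_smul_univ _ _ _
      have h2 := congrArg (fun ψ : (⨂[k]^n V) →ₗ[k] ⨂[k]^n V => lamd e h (ψ x₀)) hcomm
      simp only [LinearMap.comp_apply] at h2
      rw [h1, map_smul, map_smul, hlam] at h2
      have h3 : lamd e h (diagAction k V (scaleEquiv e t) (φ x₀))
          = (∏ i, (t (h i) : k)) * cc h := by
        have h4 := LinearMap.congr_fun (lamd_diag_scale e t h) (φ x₀)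
        rw [LinearMap.comp_apply] at h4
        rw [h4, LinearMap.smul_apply, hlam, smul_eq_mul]
      rw [h3] at h2
      have hcne : cc h ≠ 0 := Finsupp.mem_support_iff.mp hmem
      rw [smul_eq_mul] at h2
      exact mul_right_cancel₀ hcne h2
    have hcard : ∀ h ∈ cc.support, ∀ a : ι,
        (Finset.univ.filter fun i => h i = a).card
          = (Finset.univ.filter fun i => f₀ i = a).card := by
      intro h hmem a
      set t : ι → kˣ := fun b => if b = a then Units.mk0 (2 : k) two_ne_zero else 1 with ht
      have hpp := hprod h hmem t
      have key : ∀ u : Fin n → ι, (∏ i, (t (u i) : k))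
          = (2 : k) ^ (Finset.univ.filter fun i => u i = a).card := by
        intro u
        calc (∏ i, (t (u i) : k)) = ∏ i, (if u i = a then (2 : k) else 1) := by
              refine Finset.prod_congr rfl fun i _ => ?_
              by_cases hu : u i = a <;> simp [ht, hu]
          _ = ∏ i ∈ Finset.univ.filter fun i => u i = a, (2 : k) :=
              (Finset.prod_filter _ _).symm
          _ = (2 : k) ^ (Finset.univ.filter fun i => u i = a).card := Finset.prod_const _
      rw [key, key] at hpp
      have hnat : ((2 ^ (Finset.univ.filter fun i => h i = a).card : ℕ) : k)
          = ((2 ^ (Finset.univ.filter fun i => f₀ i = a).card : ℕ) : k) := by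
        push_cast
        exact hpp.symm
      exact Nat.pow_right_injective (le_refl 2) (Nat.cast_injective hnat)
    have hperm : ∀ h ∈ cc.support, ∃ σ : Perm (Fin n), ∀ i, h i = f₀ (σ i) := by
      intro h hmem
      have hinj : Function.Injective h := by
        intro i j hij
        have h1 := hcard h hmem (h i)
        have hle : (Finset.univ.filter fun i' => f₀ i' = h i).card ≤ 1 := by
          refine Finset.card_le_one.mpr fun x hx y hy => ?_
          simp only [Finset.mem_filter] at hx hy
          exact f₀.injective (hx.2.trans hy.2.symm)
        rw [← h1] at hle
        have hi : i ∈ Finset.univ.filter fun i' => h i' = h i := by simp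
        have hj : j ∈ Finset.univ.filter fun i' => h i' = h i := by simp [hij]
        exact Finset.card_le_one.mp hle i hi j hj
      have hrange : Set.range h = Set.range ⇑f₀ := by
        ext a
        constructor
        · rintro ⟨i, rfl⟩
          have h1 := hcard h hmem (h i)
          have : 0 < (Finset.univ.filter fun i' => h i' = h i).card :=
            Finset.card_pos.mpr ⟨i, by simp⟩
          rw [h1] at this
          obtain ⟨j, hj⟩ := Finset.card_pos.mp this
          simp only [Finset.mem_filter] at hj
          exact ⟨j, hj.2⟩
        · rintro ⟨i, rfl⟩
          have h1 := hcard h hmem (f₀ i)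
          have : 0 < (Finset.univ.filter fun i' => f₀ i' = f₀ i).card :=
            Finset.card_pos.mpr ⟨i, by simp⟩
          rw [← h1] at this
          obtain ⟨j, hj⟩ := Finset.card_pos.mp this
          simp only [Finset.mem_filter] at hj
          exact ⟨j, hj.2⟩
      refine ⟨(Equiv.ofInjective h hinj).trans ((Equiv.setCongr hrange).trans
        (Equiv.ofInjective f₀ f₀.injective).symm), fun i => ?_⟩
      simp only [Equiv.trans_apply]
      rw [Equiv.apply_ofInjective_symm f₀.injective]
      rfl
    have hx₀span : φ x₀ ∈ Submodule.span k
        (Set.range fun σ : Perm (Fin n) => placePerm k V σ x₀) := by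
      rw [← hcc, Finsupp.sum]
      refine Submodule.sum_mem _ fun h hmem => ?_
      obtain ⟨σ, hσ⟩ := hperm h hmem
      have heq : PiTensorProduct.tprod k (fun i => e (h i)) = placePerm k V σ x₀ := by
        rw [hx₀, placePerm_tprod]
        exact congrArg _ (funext fun i => by rw [hσ])
      rw [heq]
      exact Submodule.smul_mem _ _ (Submodule.subset_span ⟨σ, rfl⟩)
    obtain ⟨d, hd⟩ := Finsupp.mem_span_range_iff_exists_finsupp.mp hx₀span
    set ψ : (⨂[k]^n V) →ₗ[k] ⨂[k]^n V := d.sum fun σ a => a • placePerm k V σ with hψ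
    have hψmem : ψ ∈ Submodule.span k (Set.range fun σ : Perm (Fin n) => placePerm k V σ) := by
      rw [hψ, Finsupp.sum]
      exact Submodule.sum_mem _ fun σ _ =>
        Submodule.smul_mem _ _ (Submodule.subset_span ⟨σ, rfl⟩)
    have hψapp : ∀ y, ψ y = ∑ σ ∈ d.support, d σ • placePerm k V σ y := by
      intro y
      rw [hψ, Finsupp.sum]
      simp [LinearMap.sum_apply]
    have hψcomm : ∀ g : V ≃ₗ[k] V, ∀ y, ψ (diagAction k V g y) = diagAction k V g (ψ y) := by
      intro g y
      rw [hψapp, hψapp, map_sum]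
      refine Finset.sum_congr rfl fun σ _ => ?_
      rw [map_smul]
      congr 1
      have := LinearMap.congr_fun (placePerm_comm_diag σ g) y
      simpa [LinearMap.comp_apply] using this
    have hψx₀ : ψ x₀ = φ x₀ := by
      rw [hψapp, ← hd, Finsupp.sum]
    have hfinal : φ = ψ := by
      apply LinearMap.ext_on (spanIndep e n)
      rintro x ⟨v, hv, rfl⟩
      obtain ⟨g, hg⟩ := orbit_lemma e f₀ v hv
      have h1 : diagAction k V g x₀ = PiTensorProduct.tprod k v := by
        rw [hx₀, diagAction_tprod]
        exact congrArg _ (funext fun i => hg i)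
      have h2 := LinearMap.congr_fun (hφ g) x₀
      simp only [LinearMap.comp_apply] at h2
      calc φ (PiTensorProduct.tprod k v) = φ (diagAction k V g x₀) := by rw [h1]
        _ = diagAction k V g (φ x₀) := h2
        _ = diagAction k V g (ψ x₀) := by rw [hψx₀]
        _ = ψ (diagAction k V g x₀) := (hψcomm g x₀).symm
        _ = ψ (PiTensorProduct.tprod k v) := by rw [h1]
    rw [hfinal]
    exact hψmem
  · intro hφ
    refine Submodule.span_induction (fun x hx g => ?_) (fun g => ?_)
      (fun x y hx hy px py g => ?_) (fun a x hx px g => ?_) hφ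
    · obtain ⟨σ, rfl⟩ := hx
      exact placePerm_comm_diag σ g
    · rw [LinearMap.zero_comp, LinearMap.comp_zero]
    · rw [LinearMap.add_comp, LinearMap.comp_add, px g, py g]
    · rw [LinearMap.smul_comp, LinearMap.comp_smul, px g]
end
end
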